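/- arXiv:2102.05130 — 7 statements merged into one kernel-verified Lean document; each statement's English description precedes it below -/
import Mathlib

section
/- Let I and J be finite index sets, and let (A_i)_{i∈I} and (B_j)_{j∈J} be families of finite sets each of cardinality at least 2. Equip A := ∏_{i∈I} A_i and B := ∏_{j∈J} B_j with the Hamming distance (the number of coordinates in which two tuples differ). Then a bijection φ : A → B is an isometry if and only if there exist a bijection f : I → J and bijections c_i : A_i → B_{f(i)} for each i ∈ I such that φ(x)_{f(i)} = c_i(x_i) for all x ∈ A and i ∈ I. -/
open Finset Function

set_option linter.unusedSectionVars false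

section Helpers

variable {ι : Type*} [Fintype ι] [DecidableEq ι] {β : ι → Type*} [∀ i, DecidableEq (β i)]

/-- `u` and `v` differ exactly at coordinate `j`. -/
def DOnly (u v : ∀ t, β t) (j : ι) : Prop := ∀ t, u t ≠ v t ↔ t = j

theorem DOnly.symm {u v : ∀ t, β t} {j : ι} (h : DOnly u v j) : DOnly v u j := by
  intro t; rw [ne_comm]; exact h t

theorem DOnly.unique {u v : ∀ t, β t} {j j' : ι} (h : DOnly u v j) (h' : DOnly u v j') :
    j = j' := (h' j).1 ((h j).2 rfl)

theorem DOnly.eq_of_ne {u v : ∀ t, β t} {j t : ι} (h : DOnly u v j) (ht : t ≠ j) :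
    u t = v t := not_ne_iff.1 (mt (h t).1 ht)

theorem DOnly.ne_self {u v : ∀ t, β t} {j : ι} (h : DOnly u v j) : u j ≠ v j := (h j).2 rfl

theorem DOnly.filter_eq {u v : ∀ t, β t} {j : ι} (h : DOnly u v j) :
    ({t | u t ≠ v t} : Finset ι) = {j} := by
  ext t; simp only [mem_filter, mem_univ, true_and, mem_singleton]
  exact h t

theorem DOnly.hammingDist_eq {u v : ∀ t, β t} {j : ι} (h : DOnly u v j) :
    hammingDist u v = 1 := by
  rw [hammingDist, h.filter_eq, card_singleton]

theorem exists_dOnly_of_hammingDist_eq_one {u v : ∀ t, β t}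
    (h : hammingDist u v = 1) : ∃ j, DOnly u v j := by
  rw [hammingDist, card_eq_one] at h
  obtain ⟨j, hj⟩ := h
  refine ⟨j, fun t => ?_⟩
  constructor
  · intro ht
    have : t ∈ ({t | u t ≠ v t} : Finset ι) := by simpa using ht
    rw [hj] at this; simpa using this
  · intro ht; subst ht
    have : t ∈ ({t} : Finset ι) := mem_singleton_self t
    rw [← hj] at this; simpa using this

theorem two_le_hammingDist {u v : ∀ t, β t} {j j' : ι} (hjj : j ≠ j')
    (h1 : u j ≠ v j) (h2 : u j' ≠ v j') : 2 ≤ hammingDist u v := by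
  rw [hammingDist]
  have hsub : ({j, j'} : Finset ι) ⊆ univ.filter (fun t => u t ≠ v t) := by
    intro t ht
    simp only [mem_insert, mem_singleton] at ht
    rcases ht with rfl | rfl <;> simp only [mem_filter, mem_univ, true_and] <;> assumption
  calc 2 = ({j, j'} : Finset ι).card := (card_pair hjj).symm
    _ ≤ _ := card_le_card hsub

theorem hammingDist_le_one {u v : ∀ t, β t} (j : ι) (h : ∀ t, t ≠ j → u t = v t) :
    hammingDist u v ≤ 1 := by
  rw [hammingDist]
  calc ({t | u t ≠ v t} : Finset ι).card ≤ ({j} : Finset ι).card := by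
        apply card_le_card
        intro t ht
        simp only [mem_filter, mem_univ, true_and] at ht
        simp only [mem_singleton]
        by_contra h'
        exact ht (h t h')
    _ = 1 := card_singleton j

theorem dOnly_update {x : ∀ i, β i} {i : ι} {a : β i} (ha : a ≠ x i) :
    DOnly x (Function.update x i a) i := by
  intro t
  rcases eq_or_ne t i with rfl | ht
  · simpa using ha.symm
  · simp [Function.update_of_ne ht, ht]

theorem hammingDist_update_lt {x y : ∀ i, β i} {k : ι} (h : x k ≠ y k) :
    hammingDist (Function.update x k (y k)) y < hammingDist x y := by
  rw [hammingDist, hammingDist]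
  apply card_lt_card
  constructor
  · intro t ht
    simp only [mem_filter, mem_univ, true_and] at ht ⊢
    rcases eq_or_ne t k with rfl | htk
    · simp at ht
    · rwa [Function.update_of_ne htk] at ht
  · intro hsub
    have hk : k ∈ ({t | x t ≠ y t} : Finset ι) := by simpa using h
    have := hsub hk
    simp at this

end Helpers

section Main

open Finset Function

variable {I J : Type*} [Fintype I] [Fintype J] [DecidableEq I] [DecidableEq J]
  {A : I → Type*} {B : J → Type*}
  [∀ i, Fintype (A i)] [∀ j, Fintype (B j)]
  [∀ i, DecidableEq (A i)] [∀ j, DecidableEq (B j)]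

/-- Main combinatorial lemma: a Hamming isometry moves an edge in direction `i` to an edge in
a direction `f i` not depending on the basepoint. -/
theorem exists_direction (φ : (∀ i, A i) ≃ (∀ j, B j))
    (hφ : ∀ x y, hammingDist (φ x) (φ y) = hammingDist x y)
    (hA : ∀ i, 2 ≤ Fintype.card (A i)) :
    ∃ f : I → J, ∀ (y : ∀ i, A i) (i : I) (a : A i), a ≠ y i →
      DOnly (φ y) (φ (Function.update y i a)) (f i) := by
  haveI : ∀ i, Nontrivial (A i) := fun i => Fintype.one_lt_card_iff_nontrivial.1 (hA i)
  have edge : ∀ (y : ∀ i, A i) (i : I) (a : A i), a ≠ y i →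
      ∃ j, DOnly (φ y) (φ (Function.update y i a)) j := by
    intro y i a ha
    apply exists_dOnly_of_hammingDist_eq_one
    rw [hφ]
    exact (dOnly_update ha).hammingDist_eq
  -- choose a direction function
  have pick : ∀ (y : ∀ i, A i) (i : I), ∃ a : A i, a ≠ y i := fun y i => exists_ne (y i)
  let D : (∀ i, A i) → I → J := fun y i =>
    (edge y i (pick y i).choose (pick y i).choose_spec).choose
  have hD0 : ∀ y i, DOnly (φ y) (φ (Function.update y i (pick y i).choose)) (D y i) :=
    fun y i => (edge y i (pick y i).choose (pick y i).choose_spec).choose_spec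
  -- the direction does not depend on the chosen endpoint of the edge
  have hD : ∀ (y : ∀ i, A i) (i : I) (a : A i), a ≠ y i →
      DOnly (φ y) (φ (Function.update y i a)) (D y i) := by
    intro y i a ha
    obtain ⟨j, hj⟩ := edge y i a ha
    suffices h : j = D y i by rwa [h] at hj
    set a₀ := (pick y i).choose with ha₀
    rcases eq_or_ne a a₀ with rfl | haa
    · exact hj.unique (hD0 y i)
    · by_contra hne
      have hdist : hammingDist (φ (Function.update y i a)) (φ (Function.update y i a₀)) = 1 := by
        rw [hφ]
        have : Function.update y i a₀ =
            Function.update (Function.update y i a) i a₀ := by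
          rw [Function.update_idem]
        rw [this]
        exact (dOnly_update (by simpa using haa.symm)).hammingDist_eq
      have h1 : φ (Function.update y i a) j ≠ φ (Function.update y i a₀) j := by
        have e1 : φ y j ≠ φ (Function.update y i a) j := hj.ne_self
        have e2 : φ y j = φ (Function.update y i a₀) j :=
          (hD0 y i).eq_of_ne hne
        intro h; exact e1 (by rw [← h] at e2; exact e2)
      have h2 : φ (Function.update y i a) (D y i) ≠ φ (Function.update y i a₀) (D y i) := by
        have e1 : φ y (D y i) = φ (Function.update y i a) (D y i) :=
          hj.eq_of_ne (fun h => hne h.symm)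
        have e2 : φ y (D y i) ≠ φ (Function.update y i a₀) (D y i) := (hD0 y i).ne_self
        intro h; exact e2 (by rw [e1, h])
      have := two_le_hammingDist hne h1 h2
      omega
  -- the direction is constant along a line
  have hDline : ∀ (y : ∀ i, A i) (i : I) (a : A i), a ≠ y i →
      D (Function.update y i a) i = D y i := by
    intro y i a ha
    have h1 : DOnly (φ (Function.update y i a)) (φ y) (D (Function.update y i a) i) := by
      have := hD (Function.update y i a) i (y i) (by simpa using ha.symm)
      rwa [Function.update_idem, Function.update_eq_self] at this
    exact (DOnly.unique h1.symm (hD y i a ha))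
  -- the direction is invariant under moving the basepoint in another direction
  have hDrect : ∀ (y : ∀ i, A i) (k : I) (b : A k), b ≠ y k → ∀ i, i ≠ k →
      D (Function.update y k b) i = D y i := by
    intro y k b hb i hik
    set z := Function.update y k b with hz
    obtain ⟨a, ha⟩ := exists_ne (y i)
    have hzi : z i = y i := Function.update_of_ne hik _ _
    have hzk : z k = b := Function.update_self _ _ _
    set y' := Function.update y i a with hy'
    set z' := Function.update z i a with hz'
    have h1 : DOnly (φ y) (φ y') (D y i) := hD y i a ha
    have h2 : DOnly (φ z) (φ z') (D z i) := hD z i a (by rwa [hzi])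
    have h3 : DOnly (φ y) (φ z) (D y k) := hD y k b hb
    set j := D y i; set j' := D z i; set m := D y k
    have hy'i : y' i = a := Function.update_self _ _ _
    have hy'k : y' k = y k := Function.update_of_ne (Ne.symm hik) _ _
    have hz'i : z' i = a := Function.update_self _ _ _
    have hz'k : z' k = b := by rw [hz', Function.update_of_ne (Ne.symm hik), hzk]
    have hy'rest : ∀ t, t ≠ i → y' t = y t := fun t ht => Function.update_of_ne ht _ _
    have hz'rest : ∀ t, t ≠ i → z' t = z t := fun t ht => Function.update_of_ne ht _ _
    have hzrest : ∀ t, t ≠ k → z t = y t := fun t ht => Function.update_of_ne ht _ _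
    -- distance 2 facts
    have hy'z : hammingDist y' z = 2 := by
      have : ({t | y' t ≠ z t} : Finset I) = {i, k} := by
        ext t
        simp only [mem_filter, mem_univ, true_and, mem_insert, mem_singleton]
        constructor
        · intro ht
          by_contra hc
          push_neg at hc
          exact ht ((hy'rest t hc.1).trans (hzrest t hc.2).symm)
        · rintro (rfl | rfl)
          · rw [hy'i, hzi]; exact ha
          · rw [hy'k, hzk]; exact hb.symm
      rw [hammingDist, this, card_pair hik]
    have hyz' : hammingDist y z' = 2 := by
      have : ({t | y t ≠ z' t} : Finset I) = {i, k} := by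
        ext t
        simp only [mem_filter, mem_univ, true_and, mem_insert, mem_singleton]
        constructor
        · intro ht
          by_contra hc
          push_neg at hc
          exact ht (((hzrest t hc.2).symm.trans (hz'rest t hc.1).symm).symm ▸ rfl)
        · rintro (rfl | rfl)
          · rw [hz'i]; exact ha.symm
          · rw [hz'k]; exact hb.symm
      rw [hammingDist, this, card_pair hik]
    have hjm : j ≠ m := by
      intro h
      have hle : hammingDist (φ y') (φ z) ≤ 1 := by
        apply hammingDist_le_one j
        intro t ht
        have e1 : φ y' t = φ y t := (h1.eq_of_ne ht).symm
        have e2 : φ y t = φ z t := h3.eq_of_ne (h ▸ ht)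
        exact e1.trans e2
      rw [hφ] at hle
      have : hammingDist y' z = hammingDist (Function.update y i a) z := rfl
      omega
    have hj'm : j' ≠ m := by
      intro h
      have hle : hammingDist (φ y) (φ z') ≤ 1 := by
        apply hammingDist_le_one m
        intro t ht
        have e1 : φ y t = φ z t := h3.eq_of_ne ht
        have e2 : φ z t = φ z' t := h2.eq_of_ne (by rw [h]; exact ht)
        exact e1.trans e2
      rw [hφ, hyz'] at hle
      omega
    -- now suppose the directions differ
    show j' = j
    by_contra hjj'
    have hy'z' : hammingDist y' z' = 1 := by
      apply DOnly.hammingDist_eq (j := k)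
      intro t
      constructor
      · intro ht
        by_contra htk
        rcases eq_or_ne t i with rfl | hti
        · exact ht (hy'i.trans hz'i.symm)
        · exact ht ((hy'rest t hti).trans ((hzrest t htk).symm.trans (hz'rest t hti).symm))
      · rintro rfl
        rw [hy'k, hz'k]; exact hb.symm
    have d1 : φ y' j ≠ φ z' j := by
      have e1 : φ y j ≠ φ y' j := h1.ne_self
      have e2 : φ y j = φ z j := h3.eq_of_ne hjm
      have e3 : φ z j = φ z' j := h2.eq_of_ne (fun h => hjj' h.symm)
      intro h; exact e1 (by rw [e2, e3, h])
    have d2 : φ y' j' ≠ φ z' j' := by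
      have e1 : φ z j' ≠ φ z' j' := h2.ne_self
      have e2 : φ y j' = φ z j' := h3.eq_of_ne hj'm
      have e3 : φ y j' = φ y' j' := h1.eq_of_ne hjj'
      intro h; exact e1 (by rw [← e2, e3, h])
    have htwo := two_le_hammingDist (fun h : j = j' => hjj' h.symm) d1 d2
    rw [hφ, hy'z'] at htwo
    omega
  -- global constancy
  have hDconst : ∀ (y z : ∀ i, A i) (i : I), D y i = D z i := by
    have key : ∀ (n : ℕ) (y z : ∀ i, A i), hammingDist y z = n → ∀ i, D y i = D z i := by
      intro n
      induction n using Nat.strong_induction_on with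
      | _ n ih =>
        intro y z hn i
        rcases Nat.eq_zero_or_pos n with rfl | hpos
        · rw [hammingDist_eq_zero] at hn; rw [hn]
        · have hyz : y ≠ z := by
            intro h; rw [h, hammingDist_self] at hn; omega
          obtain ⟨k, hk⟩ := Function.ne_iff.1 hyz
          set y₁ := Function.update y k (z k) with hy₁
          have hlt : hammingDist y₁ z < n := hn ▸ hammingDist_update_lt hk
          have step : D y i = D y₁ i := by
            rcases eq_or_ne i k with rfl | hik
            · exact (hDline y i (z i) (Ne.symm hk)).symm
            · exact (hDrect y k (z k) (Ne.symm hk) i hik).symm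
          rw [step]
          exact ih _ hlt y₁ z rfl i
    intro y z i
    exact key (hammingDist y z) y z rfl i
  haveI : ∀ i, Nonempty (A i) := fun i => inferInstance
  let x₀ : ∀ i, A i := fun i => Classical.arbitrary (A i)
  exact ⟨D x₀, fun y i a ha => (hDconst y x₀ i) ▸ hD y i a ha⟩

end Main

/-- An isometry characterization for Hamming distances on finite products of finite sets of
cardinality `≥ 2`: a bijection `φ : ∏ i, A i → ∏ j, B j` preserves Hamming distances iff it is
induced by a bijection `f : I ≃ J` of index sets together with bijections
`c i : A i ≃ B (f i)` coordinatewise. -/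
theorem hammingDist_isometry_iff
    {I J : Type*} [Fintype I] [Fintype J] [DecidableEq I] [DecidableEq J]
    (A : I → Type*) (B : J → Type*)
    [∀ i, Fintype (A i)] [∀ j, Fintype (B j)]
    [∀ i, DecidableEq (A i)] [∀ j, DecidableEq (B j)]
    (hA : ∀ i, 2 ≤ Fintype.card (A i)) (hB : ∀ j, 2 ≤ Fintype.card (B j))
    (φ : (∀ i, A i) ≃ (∀ j, B j)) :
    (∀ x y : ∀ i, A i, hammingDist (φ x) (φ y) = hammingDist x y) ↔
      ∃ (f : I ≃ J) (c : ∀ i, A i ≃ B (f i)),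
        ∀ (x : ∀ i, A i) (i : I), φ x (f i) = c i (x i) := by
  constructor
  · intro hφ
    haveI : ∀ i, Nontrivial (A i) := fun i => Fintype.one_lt_card_iff_nontrivial.1 (hA i)
    haveI : ∀ j, Nontrivial (B j) := fun j => Fintype.one_lt_card_iff_nontrivial.1 (hB j)
    have hφ' : ∀ u v, hammingDist (φ.symm u) (φ.symm v) = hammingDist u v := by
      intro u v
      conv_rhs => rw [← φ.apply_symm_apply u, ← φ.apply_symm_apply v]
      rw [hφ]
    obtain ⟨f, hf⟩ := exists_direction φ hφ hA
    obtain ⟨g, hg⟩ := exists_direction φ.symm hφ' hB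
    let x₀ : ∀ i, A i := fun i => Classical.arbitrary (A i)
    -- g ∘ f = id
    have gfi : ∀ i, g (f i) = i := by
      intro i
      obtain ⟨a, ha⟩ := exists_ne (x₀ i)
      have h1 := hf x₀ i a ha
      set v := φ (Function.update x₀ i a) with hv
      have hb : v (f i) ≠ φ x₀ (f i) := h1.ne_self.symm
      have hupd : Function.update (φ x₀) (f i) (v (f i)) = v := by
        funext t
        rcases eq_or_ne t (f i) with rfl | ht
        · simp
        · rw [Function.update_of_ne ht]
          exact h1.eq_of_ne ht
      have h2 := hg (φ x₀) (f i) (v (f i)) hb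
      rw [hupd, hv, Equiv.symm_apply_apply, Equiv.symm_apply_apply] at h2
      exact (DOnly.unique (dOnly_update ha) h2).symm
    -- f ∘ g = id
    have fgj : ∀ j, f (g j) = j := by
      intro j
      set u := φ x₀ with hu
      obtain ⟨b, hb⟩ := exists_ne (u j)
      have h1 := hg u j b hb
      rw [hu, Equiv.symm_apply_apply] at h1
      set y' := φ.symm (Function.update u j b) with hy'
      have hne : y' (g j) ≠ x₀ (g j) := h1.ne_self.symm
      have hupd : Function.update x₀ (g j) (y' (g j)) = y' := by
        funext t
        rcases eq_or_ne t (g j) with rfl | ht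
        · simp
        · rw [Function.update_of_ne ht]
          exact h1.eq_of_ne ht
      have h2 := hf x₀ (g j) (y' (g j)) hne
      rw [hupd, hy', Equiv.apply_symm_apply, ← hu] at h2
      exact (DOnly.unique (dOnly_update hb) h2).symm
    have hfinj : Function.Injective f := Function.LeftInverse.injective gfi
    -- coordinate i of φ x depends only on x i
    have hcoord : ∀ (x x' : ∀ i, A i) (i : I), x i = x' i → φ x (f i) = φ x' (f i) := by
      have key : ∀ (n : ℕ) (x x' : ∀ i, A i) (i : I), hammingDist x x' = n →
          x i = x' i → φ x (f i) = φ x' (f i) := by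
        intro n
        induction n using Nat.strong_induction_on with
        | _ n ih =>
          intro x x' i hn hi
          rcases Nat.eq_zero_or_pos n with rfl | hpos
          · rw [hammingDist_eq_zero] at hn; rw [hn]
          · have hxx : x ≠ x' := by
              intro h; rw [h, hammingDist_self] at hn; omega
            obtain ⟨k, hk⟩ := Function.ne_iff.1 hxx
            have hki : k ≠ i := fun h => hk (h ▸ hi)
            set x₁ := Function.update x k (x' k) with hx₁
            have hlt : hammingDist x₁ x' < n := hn ▸ hammingDist_update_lt hk
            have h1 := hf x k (x' k) (Ne.symm hk)
            have e1 : φ x (f i) = φ x₁ (f i) :=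
              h1.eq_of_ne (fun h => hki (hfinj h).symm)
            rw [e1]
            exact ih _ hlt x₁ x' i rfl (by rw [hx₁, Function.update_of_ne (Ne.symm hki)]; exact hi)
      intro x x' i hi
      exact key (hammingDist x x') x x' i rfl hi
    -- the coordinate bijections
    let c0 : ∀ i, A i → B (f i) := fun i a => φ (Function.update x₀ i a) (f i)
    have hc0inj : ∀ i, Function.Injective (c0 i) := by
      intro i a a' h
      by_contra haa
      have h1 := hf (Function.update x₀ i a) i a'
        (by rw [Function.update_self]; exact fun h' => haa h'.symm)
      rw [Function.update_idem] at h1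
      exact h1.ne_self (by exact h)
    have hc0surj : ∀ i, Function.Surjective (c0 i) := by
      intro i b
      rcases eq_or_ne b (φ x₀ (f i)) with rfl | hb
      · refine ⟨x₀ i, ?_⟩
        show φ (Function.update x₀ i (x₀ i)) (f i) = φ x₀ (f i)
        rw [Function.update_eq_self]
      · have h1 := hg (φ x₀) (f i) b hb
        rw [Equiv.symm_apply_apply, gfi] at h1
        set x := φ.symm (Function.update (φ x₀) (f i) b) with hx
        refine ⟨x i, ?_⟩
        have hupd : Function.update x₀ i (x i) = x := by
          funext t
          rcases eq_or_ne t i with rfl | ht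
          · simp
          · rw [Function.update_of_ne ht]
            exact h1.eq_of_ne ht
        show φ (Function.update x₀ i (x i)) (f i) = b
        rw [hupd, hx, Equiv.apply_symm_apply, Function.update_self]
    let fE : I ≃ J := ⟨f, g, gfi, fgj⟩
    refine ⟨fE, fun i => Equiv.ofBijective (c0 i) ⟨hc0inj i, hc0surj i⟩, ?_⟩
    intro x i
    show φ x (f i) = φ (Function.update x₀ i (x i)) (f i)
    exact hcoord x (Function.update x₀ i (x i)) i (by rw [Function.update_self])
  · rintro ⟨f, c, h⟩ x y
    rw [hammingDist, hammingDist]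
    apply Finset.card_bij' (fun j _ => f.symm j) (fun i _ => f i)
    · intro j hj
      simp only [mem_filter, mem_univ, true_and] at hj ⊢
      intro he
      apply hj
      have := f.apply_symm_apply j
      rw [← this, h x, h y, he]
    · intro i hi
      simp only [mem_filter, mem_univ, true_and] at hi ⊢
      rw [h x, h y]
      exact fun he => hi ((c i).injective he)
    · intro j _; exact f.apply_symm_apply j
    · intro i _; exact f.symm_apply_apply i
end

section
/- Let I and J be finite index sets, let (A_i)_{i∈I} and (B_j)_{j∈J} be families of finite sets with |A_i| ≥ 2 and |B_j| ≥ 2 for all i, j, and equip the products ∏_{i∈I} A_i and ∏_{j∈J} B_j with the Hamming distance. If there exists an isometric (hence injective) map ∏_{j∈J} B_j → ∏_{i∈I} A_i, then |J| ≤ |I|. -/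
/-- If there is a Hamming-isometric map `∏ j, B j → ∏ i, A i` between finite products of finite
sets each of cardinality `≥ 2`, then `|J| ≤ |I|`. -/
theorem card_le_of_hamming_isometric
    {I J : Type*} [Fintype I] [Fintype J] [DecidableEq I] [DecidableEq J]
    (A : I → Type*) (B : J → Type*)
    [∀ i, Fintype (A i)] [∀ j, Fintype (B j)]
    [∀ i, DecidableEq (A i)] [∀ j, DecidableEq (B j)]
    (hA : ∀ i, 2 ≤ Fintype.card (A i)) (hB : ∀ j, 2 ≤ Fintype.card (B j))
    (φ : (∀ j, B j) → (∀ i, A i))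
    (hφ : ∀ x y : ∀ j, B j, hammingDist (φ x) (φ y) = hammingDist x y) :
    Fintype.card J ≤ Fintype.card I := by
  classical
  have hBn : ∀ j, Nonempty (B j) := fun j =>
    Fintype.card_pos_iff.mp (by have := hB j; omega)
  let x0 : ∀ j, B j := fun j => Classical.choice (hBn j)
  have hy : ∀ j, ∃ b : B j, b ≠ x0 j := fun j =>
    Fintype.exists_ne_of_one_lt_card (by have := hB j; omega) _
  choose y hyne using hy
  set x : J → ∀ j, B j := fun j => Function.update x0 j (y j) with hxdef
  have hfilt : ∀ j : J,
      (Finset.univ.filter fun k => x j k ≠ x0 k) = {j} := by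
    intro j
    ext k
    simp only [Finset.mem_filter, Finset.mem_univ, true_and, Finset.mem_singleton, hxdef]
    constructor
    · intro hk
      by_contra hkj
      exact hk (Function.update_of_ne hkj _ _)
    · rintro rfl
      simpa using hyne _
  have hd1 : ∀ j, hammingDist (x j) x0 = 1 := by
    intro j
    rw [hammingDist, hfilt j, Finset.card_singleton]
  -- the unique coordinate where φ (x j) differs from φ x0
  have hdφ : ∀ j, (Finset.univ.filter fun i => φ (x j) i ≠ φ x0 i).card = 1 := by
    intro j
    have := hφ (x j) x0
    rw [hd1 j] at this
    simpa [hammingDist] using this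
  have hex : ∀ j, ∃ i, (Finset.univ.filter fun i => φ (x j) i ≠ φ x0 i) = {i} := fun j =>
    Finset.card_eq_one.mp (hdφ j)
  choose f hf using hex
  have hagree : ∀ j, ∀ i, i ≠ f j → φ (x j) i = φ x0 i := by
    intro j i hi
    by_contra h
    have : i ∈ (Finset.univ.filter fun i => φ (x j) i ≠ φ x0 i) := by
      simp [h]
    rw [hf j] at this
    exact hi (Finset.mem_singleton.mp this)
  have hinj : Function.Injective f := by
    intro j j' hjj'
    by_contra hne
    -- x j and x j' differ at exactly j and j', so distance is 2
    have h2 : 2 ≤ hammingDist (x j) (x j') := by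
      have hsub : ({j, j'} : Finset J) ⊆
          (Finset.univ.filter fun k => x j k ≠ x j' k) := by
        intro k hk
        simp only [Finset.mem_insert, Finset.mem_singleton] at hk
        simp only [Finset.mem_filter, Finset.mem_univ, true_and, hxdef]
        rcases hk with rfl | rfl
        · rw [Function.update_self, Function.update_of_ne hne]
          exact hyne k
        · rw [Function.update_self, Function.update_of_ne (Ne.symm hne)]
          exact fun h => hyne k h.symm
      calc 2 = ({j, j'} : Finset J).card := by
              rw [Finset.card_insert_of_notMem (by simpa using hne),
                Finset.card_singleton]
        _ ≤ _ := Finset.card_le_card hsub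
    -- but φ (x j) and φ (x j') differ only possibly at f j
    have hle : hammingDist (φ (x j)) (φ (x j')) ≤ 1 := by
      have hsub : (Finset.univ.filter fun i => φ (x j) i ≠ φ (x j') i) ⊆ {f j} := by
        intro i hi
        simp only [Finset.mem_filter, Finset.mem_univ, true_and] at hi
        simp only [Finset.mem_singleton]
        by_contra hifj
        have h1 := hagree j i hifj
        have h2' := hagree j' i (by rw [← hjj']; exact hifj)
        exact hi (h1.trans h2'.symm)
      calc hammingDist (φ (x j)) (φ (x j'))
          ≤ ({f j} : Finset I).card := Finset.card_le_card hsub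
        _ = 1 := Finset.card_singleton _
    rw [hφ] at hle
    omega
  exact Fintype.card_le_of_injective f hinj
end

section
/- Let R be a commutative ring, a ∈ R, n ≥ 1 and 0 ≤ k < n. Consider the polynomial ring P := R[T_0,…,T_n, S]. Then there is an R-algebra isomorphism P/(T_0⋯T_k·S − 1, T_0⋯T_n − a) ≅ P/(T_0⋯T_k·S − 1, T_{k+1}⋯T_n − a), which fixes the classes of T_0,…,T_{n−1} and S and sends the class of T_n to the class of S·T_n; its inverse fixes T_0,…,T_{n−1}, S and sends the class of T_n to the class of T_0⋯T_k·T_n. -/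
open MvPolynomial

namespace Stmt10

variable (R : Type*) [CommRing R]

/-- The variable `T_i` (for `i : Fin (n+1)`) inside `R[T_0,…,T_n,S]`,
where the variables are indexed by `Fin (n+2)` with the last index playing the role of `S`. -/
noncomputable def T (n : ℕ) (i : Fin (n + 1)) : MvPolynomial (Fin (n + 2)) R :=
  X i.castSucc

/-- The variable `S` inside `R[T_0,…,T_n,S]`. -/
noncomputable def S (n : ℕ) : MvPolynomial (Fin (n + 2)) R :=
  X (Fin.last (n + 1))

/-- The product `T_0 ⋯ T_k`. -/
noncomputable def prodLow (n k : ℕ) : MvPolynomial (Fin (n + 2)) R :=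
  ∏ i ∈ Finset.univ.filter (fun i : Fin (n + 1) => (i : ℕ) ≤ k), T R n i

/-- The product `T_0 ⋯ T_n`. -/
noncomputable def prodAll (n : ℕ) : MvPolynomial (Fin (n + 2)) R :=
  ∏ i : Fin (n + 1), T R n i

/-- The product `T_{k+1} ⋯ T_n`. -/
noncomputable def prodHigh (n k : ℕ) : MvPolynomial (Fin (n + 2)) R :=
  ∏ i ∈ Finset.univ.filter (fun i : Fin (n + 1) => k < (i : ℕ)), T R n i

/-- The ideal `(T_0⋯T_k·S − 1, T_0⋯T_n − a)`. -/
noncomputable def I₁ (a : R) (n k : ℕ) : Ideal (MvPolynomial (Fin (n + 2)) R) :=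
  Ideal.span {prodLow R n k * S R n - 1, prodAll R n - C a}

/-- The ideal `(T_0⋯T_k·S − 1, T_{k+1}⋯T_n − a)`. -/
noncomputable def I₂ (a : R) (n k : ℕ) : Ideal (MvPolynomial (Fin (n + 2)) R) :=
  Ideal.span {prodLow R n k * S R n - 1, prodHigh R n k - C a}

/-- Substitution `T_n ↦ c * T_n`, all other variables fixed. -/
noncomputable def subst (n : ℕ) (c : MvPolynomial (Fin (n + 2)) R) :
    MvPolynomial (Fin (n + 2)) R →ₐ[R] MvPolynomial (Fin (n + 2)) R :=
  aeval (fun j : Fin (n + 2) =>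
    if j = Fin.castSucc (Fin.last n) then c * T R n (Fin.last n) else X j)

lemma subst_X_ne {n : ℕ} (c : MvPolynomial (Fin (n + 2)) R) {j : Fin (n + 2)}
    (hj : j ≠ Fin.castSucc (Fin.last n)) : subst R n c (X j) = X j := by
  simp [subst, hj]

lemma subst_T {n : ℕ} (c : MvPolynomial (Fin (n + 2)) R) (i : Fin (n + 1)) :
    subst R n c (T R n i) = (if i = Fin.last n then c else 1) * T R n i := by
  rw [T, subst, aeval_X]
  by_cases h : i = Fin.last n
  · subst h; simp [T]
  · rw [if_neg (by simpa [Fin.castSucc_inj] using h), if_neg h, one_mul]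

lemma subst_S {n : ℕ} (c : MvPolynomial (Fin (n + 2)) R) :
    subst R n c (S R n) = S R n := by
  rw [S]
  apply subst_X_ne
  intro h
  have := congrArg Fin.val h
  simp [Fin.val_last] at this

lemma subst_prod {n : ℕ} (c : MvPolynomial (Fin (n + 2)) R) (s : Finset (Fin (n + 1))) :
    subst R n c (∏ i ∈ s, T R n i)
      = (if Fin.last n ∈ s then c else 1) * ∏ i ∈ s, T R n i := by
  rw [map_prod]
  rw [Finset.prod_congr rfl (fun i _ => subst_T R c i), Finset.prod_mul_distrib,
    Finset.prod_ite_eq' s (Fin.last n) (fun _ => c)]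

lemma subst_prodLow {n k : ℕ} (hk : k < n) (c : MvPolynomial (Fin (n + 2)) R) :
    subst R n c (prodLow R n k) = prodLow R n k := by
  rw [prodLow, subst_prod, if_neg, one_mul]
  simp only [Finset.mem_filter, Finset.mem_univ, true_and, Fin.val_last]
  omega

lemma subst_prodHigh {n k : ℕ} (hk : k < n) (c : MvPolynomial (Fin (n + 2)) R) :
    subst R n c (prodHigh R n k) = c * prodHigh R n k := by
  rw [prodHigh, subst_prod, if_pos]
  simp only [Finset.mem_filter, Finset.mem_univ, true_and, Fin.val_last]
  omega

lemma prodAll_eq {n k : ℕ} : prodAll R n = prodLow R n k * prodHigh R n k := by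
  rw [prodAll, prodLow, prodHigh,
    ← Finset.prod_filter_mul_prod_filter_not Finset.univ (fun i : Fin (n + 1) => (i : ℕ) ≤ k)]
  congr 1
  apply Finset.prod_congr _ fun _ _ => rfl
  ext i; simp [not_le]

lemma subst_C {n : ℕ} (c : MvPolynomial (Fin (n + 2)) R) (r : R) :
    subst R n c (C r) = C r := by
  simp [subst]

lemma subst_prodAll {n k : ℕ} (hk : k < n) (c : MvPolynomial (Fin (n + 2)) R) :
    subst R n c (prodAll R n) = c * prodAll R n := by
  rw [prodAll_eq R (k := k), map_mul, subst_prodLow R hk, subst_prodHigh R hk]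
  ring

/-- Inverting `T_0⋯T_k` in the standard ring:
there is an `R`-algebra isomorphism
`R[T,S]/(T_0⋯T_k·S − 1, T_0⋯T_n − a) ≅ R[T,S]/(T_0⋯T_k·S − 1, T_{k+1}⋯T_n − a)`
fixing the classes of `T_0,…,T_{n−1}` and `S` and sending `T_n` to `S·T_n`; its inverse fixes
`T_0,…,T_{n−1}, S` and sends `T_n` to `T_0⋯T_k·T_n`. -/
theorem exists_algEquiv (a : R) (n k : ℕ) (hn : 1 ≤ n) (hk : k < n) :
    ∃ e : (MvPolynomial (Fin (n + 2)) R ⧸ I₁ R a n k) ≃ₐ[R]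
          (MvPolynomial (Fin (n + 2)) R ⧸ I₂ R a n k),
      (∀ i : Fin (n + 1), (i : ℕ) < n →
        e (Ideal.Quotient.mk (I₁ R a n k) (T R n i))
          = Ideal.Quotient.mk (I₂ R a n k) (T R n i)) ∧
      e (Ideal.Quotient.mk (I₁ R a n k) (S R n))
          = Ideal.Quotient.mk (I₂ R a n k) (S R n) ∧
      e (Ideal.Quotient.mk (I₁ R a n k) (T R n (Fin.last n)))
          = Ideal.Quotient.mk (I₂ R a n k) (S R n * T R n (Fin.last n)) ∧
      (∀ i : Fin (n + 1), (i : ℕ) < n →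
        e.symm (Ideal.Quotient.mk (I₂ R a n k) (T R n i))
          = Ideal.Quotient.mk (I₁ R a n k) (T R n i)) ∧
      e.symm (Ideal.Quotient.mk (I₂ R a n k) (S R n))
          = Ideal.Quotient.mk (I₁ R a n k) (S R n) ∧
      e.symm (Ideal.Quotient.mk (I₂ R a n k) (T R n (Fin.last n)))
          = Ideal.Quotient.mk (I₁ R a n k) (prodLow R n k * T R n (Fin.last n)) := by
  -- the two lifted algebra homs
  set P := MvPolynomial (Fin (n + 2)) R
  have hg1₁ : prodLow R n k * S R n - 1 ∈ I₁ R a n k :=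
    Ideal.subset_span (by simp)
  have hg2₁ : prodAll R n - C a ∈ I₁ R a n k :=
    Ideal.subset_span (by simp)
  have hg1₂ : prodLow R n k * S R n - 1 ∈ I₂ R a n k :=
    Ideal.subset_span (by simp)
  have hg2₂ : prodHigh R n k - C a ∈ I₂ R a n k :=
    Ideal.subset_span (by simp)
  set F : P →ₐ[R] P ⧸ I₂ R a n k :=
    (Ideal.Quotient.mkₐ R (I₂ R a n k)).comp (subst R n (S R n)) with hF
  set G : P →ₐ[R] P ⧸ I₁ R a n k :=
    (Ideal.Quotient.mkₐ R (I₁ R a n k)).comp (subst R n (prodLow R n k)) with hG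
  have hFzero : ∀ p ∈ I₁ R a n k, F p = 0 := by
    have hker : I₁ R a n k ≤ RingHom.ker F.toRingHom := by
      rw [I₁, Ideal.span_le]
      rintro x hx
      simp only [Set.mem_insert_iff, Set.mem_singleton_iff] at hx
      rw [SetLike.mem_coe, RingHom.mem_ker]
      rcases hx with rfl | rfl
      · show F _ = 0
        rw [hF, AlgHom.comp_apply, map_sub, map_mul, subst_prodLow R hk, subst_S, map_one]
        exact Ideal.Quotient.eq_zero_iff_mem.2 hg1₂
      · show F _ = 0
        rw [hF, AlgHom.comp_apply, map_sub, subst_prodAll R hk, subst_C]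
        apply Ideal.Quotient.eq_zero_iff_mem.2
        have : S R n * prodAll R n - C a =
            (prodLow R n k * S R n - 1) * prodHigh R n k + (prodHigh R n k - C a) := by
          rw [prodAll_eq R (k := k)]; ring
        simpa [this, Ideal.Quotient.mkₐ_eq_mk, algebraMap_eq] using
          add_mem (Ideal.mul_mem_right _ _ hg1₂) hg2₂
    exact fun p hp => hker hp
  have hGzero : ∀ p ∈ I₂ R a n k, G p = 0 := by
    have hker : I₂ R a n k ≤ RingHom.ker G.toRingHom := by
      rw [I₂, Ideal.span_le]
      rintro x hx
      simp only [Set.mem_insert_iff, Set.mem_singleton_iff] at hx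
      rw [SetLike.mem_coe, RingHom.mem_ker]
      rcases hx with rfl | rfl
      · show G _ = 0
        rw [hG, AlgHom.comp_apply, map_sub, map_mul, subst_prodLow R hk, subst_S, map_one]
        exact Ideal.Quotient.eq_zero_iff_mem.2 hg1₁
      · show G _ = 0
        rw [hG, AlgHom.comp_apply, map_sub, subst_prodHigh R hk, subst_C]
        apply Ideal.Quotient.eq_zero_iff_mem.2
        have : prodLow R n k * prodHigh R n k - C a = prodAll R n - C a := by
          rw [prodAll_eq R (k := k)]
        simpa [Ideal.Quotient.mkₐ_eq_mk, algebraMap_eq, this] using hg2₁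
    exact fun p hp => hker hp
  set F' := Ideal.Quotient.liftₐ (I₁ R a n k) F hFzero with hF'
  set G' := Ideal.Quotient.liftₐ (I₂ R a n k) G hGzero with hG'
  have hF'mk : ∀ p : P, F' (Ideal.Quotient.mk (I₁ R a n k) p) = F p := fun p =>
    Ideal.Quotient.liftₐ_apply _ _ _ _
  have hG'mk : ∀ p : P, G' (Ideal.Quotient.mk (I₂ R a n k) p) = G p := fun p =>
    Ideal.Quotient.liftₐ_apply _ _ _ _
  -- the key roundtrip on X j
  have key : ∀ (j : Fin (n + 2)),
      F' (G (X j)) = Ideal.Quotient.mk (I₂ R a n k) (X j) ∧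
      G' (F (X j)) = Ideal.Quotient.mk (I₁ R a n k) (X j) := by
    intro j
    by_cases hj : j = Fin.castSucc (Fin.last n)
    · subst hj
      constructor
      · rw [hG, AlgHom.comp_apply]
        show F' (Ideal.Quotient.mk _ (subst R n (prodLow R n k) (X _))) = _
        rw [hF'mk, show (X (Fin.castSucc (Fin.last n)) : P) = T R n (Fin.last n) from rfl,
          subst_T, if_pos rfl, hF, AlgHom.comp_apply, map_mul, subst_prodLow R hk,
          subst_T, if_pos rfl]
        show Ideal.Quotient.mk _ (prodLow R n k * (S R n * T R n (Fin.last n))) = _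
        rw [Ideal.Quotient.eq]
        have : prodLow R n k * (S R n * T R n (Fin.last n)) - T R n (Fin.last n)
            = (prodLow R n k * S R n - 1) * T R n (Fin.last n) := by ring
        rw [this]
        exact Ideal.mul_mem_right _ _ hg1₂
      · rw [hF, AlgHom.comp_apply]
        show G' (Ideal.Quotient.mk _ (subst R n (S R n) (X _))) = _
        rw [hG'mk, show (X (Fin.castSucc (Fin.last n)) : P) = T R n (Fin.last n) from rfl,
          subst_T, if_pos rfl, hG, AlgHom.comp_apply, map_mul, subst_S,
          subst_T, if_pos rfl]
        show Ideal.Quotient.mk _ (S R n * (prodLow R n k * T R n (Fin.last n))) = _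
        rw [Ideal.Quotient.eq]
        have : S R n * (prodLow R n k * T R n (Fin.last n)) - T R n (Fin.last n)
            = (prodLow R n k * S R n - 1) * T R n (Fin.last n) := by ring
        rw [this]
        exact Ideal.mul_mem_right _ _ hg1₁
    · constructor
      · rw [hG, AlgHom.comp_apply, subst_X_ne R _ hj]
        show F' (Ideal.Quotient.mk _ (X j)) = _
        rw [hF'mk, hF, AlgHom.comp_apply, subst_X_ne R _ hj]
        rfl
      · rw [hF, AlgHom.comp_apply, subst_X_ne R _ hj]
        show G' (Ideal.Quotient.mk _ (X j)) = _
        rw [hG'mk, hG, AlgHom.comp_apply, subst_X_ne R _ hj]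
        rfl
  have h₁ : F'.comp G' = AlgHom.id R (P ⧸ I₂ R a n k) := by
    apply Ideal.Quotient.algHom_ext
    apply MvPolynomial.algHom_ext
    intro j
    simp only [AlgHom.comp_apply, Ideal.Quotient.mkₐ_eq_mk, AlgHom.id_apply]
    rw [hG'mk]
    exact (key j).1
  have h₂ : G'.comp F' = AlgHom.id R (P ⧸ I₁ R a n k) := by
    apply Ideal.Quotient.algHom_ext
    apply MvPolynomial.algHom_ext
    intro j
    simp only [AlgHom.comp_apply, Ideal.Quotient.mkₐ_eq_mk, AlgHom.id_apply]
    rw [hF'mk]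
    exact (key j).2
  have eapp : ∀ x, (AlgEquiv.ofAlgHom F' G' h₁ h₂) x = F' x := fun _ => rfl
  have esymm : ∀ x, (AlgEquiv.ofAlgHom F' G' h₁ h₂).symm x = G' x := by
    rw [AlgEquiv.ofAlgHom_symm]; exact fun _ => rfl
  refine ⟨AlgEquiv.ofAlgHom F' G' h₁ h₂, ?_, ?_, ?_, ?_, ?_, ?_⟩
  · intro i hi
    rw [eapp, hF'mk, hF, AlgHom.comp_apply, subst_T, if_neg (by simp [Fin.ext_iff]; omega), one_mul]
    rfl
  · rw [eapp, hF'mk, hF, AlgHom.comp_apply, subst_S]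
    rfl
  · rw [eapp, hF'mk, hF, AlgHom.comp_apply, subst_T, if_pos rfl]
    rfl
  · intro i hi
    rw [esymm, hG'mk, hG, AlgHom.comp_apply, subst_T, if_neg (by simp [Fin.ext_iff]; omega), one_mul]
    rfl
  · rw [esymm, hG'mk, hG, AlgHom.comp_apply, subst_S]
    rfl
  · rw [esymm, hG'mk, hG, AlgHom.comp_apply, subst_T, if_pos rfl]
    rfl

end Stmt10
end

section
/- Let R be a commutative ring, a ∈ R, and n ∈ ℕ. Then the quotient ring R[X_0,…,X_n]/(X_0⋯X_n − a) is a free R-module with basis the images of the monomials X^μ = X_0^{μ_0}⋯X_n^{μ_n} for which min_j μ_j = 0 (equivalently, the monomials not divisible by X_0⋯X_n). -/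
/-!
Write every exponent as `μ = ρ(μ) + m(μ) • 𝟙` with `m(μ) = min_j μ_j`, so that
`X^μ ≡ a^{m(μ)} X^{ρ(μ)}` modulo `X_0⋯X_n - a`: the reduced monomials span. For independence,
the `R`-linear map `X^μ ↦ a^{m(μ)} e_{ρ(μ)}` is a left inverse of `e_ν ↦ X^ν` on reduced
exponents, and it kills the ideal, because multiplying by `X_0⋯X_n` raises `m` by one without
changing `ρ`, which the factor `a` exactly compensates.
-/

open MvPolynomial

namespace StandardRing

section Exponents

variable (σ : Type*)

abbrev ReducedExponent := {μ : σ →₀ ℕ // ∃ j, μ j = 0}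

variable [Fintype σ]

noncomputable def ones : σ →₀ ℕ := Finsupp.equivFunOnFinite.symm 1

variable {σ}

@[simp] lemma ones_apply (j : σ) : ones σ j = 1 := rfl

variable [Nonempty σ]

def minExponent (μ : σ →₀ ℕ) : ℕ := Finset.univ.inf' Finset.univ_nonempty μ

lemma minExponent_le (μ : σ →₀ ℕ) (j : σ) : minExponent μ ≤ μ j :=
  Finset.inf'_le _ (Finset.mem_univ j)

lemma exists_apply_eq_minExponent (μ : σ →₀ ℕ) : ∃ j, μ j = minExponent μ := by
  obtain ⟨j, -, hj⟩ := Finset.exists_mem_eq_inf' Finset.univ_nonempty μ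
  exact ⟨j, hj.symm⟩

lemma minExponent_eq_zero (ν : ReducedExponent σ) : minExponent ν.1 = 0 := by
  obtain ⟨j, hj⟩ := ν.2
  have := minExponent_le ν.1 j
  omega

lemma minExponent_add_ones (μ : σ →₀ ℕ) : minExponent (μ + ones σ) = minExponent μ + 1 := by
  obtain ⟨j, hj⟩ := exists_apply_eq_minExponent μ
  refine le_antisymm ?_ (Finset.le_inf' _ _ fun i _ => by simpa using minExponent_le μ i)
  simpa [hj] using minExponent_le (μ + ones σ) j

noncomputable def reduce (μ : σ →₀ ℕ) : ReducedExponent σ :=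
  ⟨μ - minExponent μ • ones σ, by
    obtain ⟨j, hj⟩ := exists_apply_eq_minExponent μ
    exact ⟨j, by simp [hj]⟩⟩

lemma reduce_apply (μ : σ →₀ ℕ) (j : σ) : (reduce μ).1 j = μ j - minExponent μ := by
  simp [reduce]

lemma reduce_add_minExponent_smul_ones (μ : σ →₀ ℕ) :
    (reduce μ).1 + minExponent μ • ones σ = μ := by
  ext j
  simp [reduce_apply, Nat.sub_add_cancel (minExponent_le μ j)]

lemma reduce_coe (ν : ReducedExponent σ) : reduce ν.1 = ν :=
  Subtype.ext <| Finsupp.ext fun j => by simp [reduce_apply, minExponent_eq_zero ν]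

lemma reduce_add_ones (μ : σ →₀ ℕ) : reduce (μ + ones σ) = reduce μ :=
  Subtype.ext <| Finsupp.ext fun j => by simp [reduce_apply, minExponent_add_ones]

end Exponents

section Polynomials

variable {σ R : Type*} [CommSemiring R]

variable (R) in
noncomputable def reducedMonomials : (ReducedExponent σ →₀ R) →ₗ[R] MvPolynomial σ R :=
  Finsupp.linearCombination R fun ν => monomial ν.1 1

lemma reducedMonomials_single (ν : ReducedExponent σ) (c : R) :
    reducedMonomials R (Finsupp.single ν c) = monomial ν.1 c := by
  simp [reducedMonomials, smul_monomial]

lemma prod_X_eq_monomial_ones [Fintype σ] : ∏ i : σ, X i = monomial (ones σ) (1 : R) := by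
  classical
  rw [← prod_X_pow_eq_monomial]
  exact Finset.prod_congr (by ext; simp) (by simp)

end Polynomials

section Quotient

variable {σ R : Type*} [Fintype σ] [Nonempty σ] [CommRing R] (a : R)

noncomputable def normalFormCoeffs : MvPolynomial σ R →ₗ[R] (ReducedExponent σ →₀ R) :=
  Finsupp.lsum R (fun μ => a ^ minExponent μ • Finsupp.lsingle (reduce μ)) ∘ₗ
    (AddMonoidAlgebra.coeffLinearEquiv R).toLinearMap

lemma normalFormCoeffs_monomial (μ : σ →₀ ℕ) (c : R) :
    normalFormCoeffs a (monomial μ c) = Finsupp.single (reduce μ) (a ^ minExponent μ * c) := by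
  show Finsupp.lsum R _ (Finsupp.single μ c) = _
  simp [Finsupp.smul_single]

lemma normalFormCoeffs_reducedMonomials (x : ReducedExponent σ →₀ R) :
    normalFormCoeffs a (reducedMonomials R x) = x := by
  induction x using Finsupp.induction_linear with
  | zero => simp
  | add x y hx hy => simp only [map_add, hx, hy]
  | single ν c => rw [reducedMonomials_single, normalFormCoeffs_monomial, reduce_coe,
      minExponent_eq_zero, pow_zero, one_mul]

lemma normalFormCoeffs_mul_prod_X_sub_C (q : MvPolynomial σ R) :
    normalFormCoeffs a (q * ((∏ i, X i) - C a)) = 0 := by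
  induction q using MvPolynomial.induction_on' with
  | monomial μ c =>
    have hexpand : monomial μ c * ((∏ i, X i) - C a)
        = monomial (μ + ones σ) c - monomial μ (a * c) := by
      rw [mul_sub, prod_X_eq_monomial_ones, monomial_mul, mul_one, mul_comm, C_mul_monomial]
    rw [hexpand, map_sub, normalFormCoeffs_monomial, normalFormCoeffs_monomial, reduce_add_ones,
      minExponent_add_ones, pow_succ, mul_assoc, sub_self]
  | add p q hp hq => rw [add_mul, map_add, hp, hq, add_zero]

lemma mk_monomial_eq (μ : σ →₀ ℕ) (c : R) :
    Ideal.Quotient.mk (Ideal.span {(∏ i, X i) - C a}) (monomial μ c)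
      = Ideal.Quotient.mk _ (monomial (reduce μ).1 (a ^ minExponent μ * c)) := by
  have hprod : Ideal.Quotient.mk (Ideal.span {(∏ i, X i) - C a}) (∏ i : σ, X i)
      = Ideal.Quotient.mk _ (C a) :=
    Ideal.Quotient.mk_eq_mk_iff_sub_mem _ _ |>.2 (Ideal.subset_span rfl)
  have hsplit : (monomial μ c : MvPolynomial σ R)
      = monomial (reduce μ).1 c * (∏ i : σ, X i) ^ minExponent μ := by
    rw [prod_X_eq_monomial_ones, monomial_pow, monomial_mul, one_pow, mul_one,
      reduce_add_minExponent_smul_ones]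
  rw [hsplit, map_mul, map_pow, hprod, ← map_pow, ← map_mul, ← C_pow, mul_comm, C_mul_monomial]

lemma mk_reducedMonomials_normalFormCoeffs (p : MvPolynomial σ R) :
    Ideal.Quotient.mk (Ideal.span {(∏ i, X i) - C a})
      (reducedMonomials R (normalFormCoeffs a p)) = Ideal.Quotient.mk _ p := by
  induction p using MvPolynomial.induction_on' with
  | monomial μ c => rw [normalFormCoeffs_monomial, reducedMonomials_single, mk_monomial_eq a μ c]
  | add p q hp hq => simp only [map_add, hp, hq]

noncomputable def quotientEquiv :
    (ReducedExponent σ →₀ R) ≃ₗ[R] MvPolynomial σ R ⧸ Ideal.span {(∏ i, X i) - C a} := by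
  refine .ofBijective ((Ideal.Quotient.mkₐ R _).toLinearMap ∘ₗ reducedMonomials R) ⟨?_, ?_⟩
  · rw [← LinearMap.ker_eq_bot, LinearMap.ker_eq_bot']
    intro x hx
    obtain ⟨q, hq⟩ := Ideal.mem_span_singleton'.1 (Ideal.Quotient.eq_zero_iff_mem.1 hx)
    rw [← normalFormCoeffs_reducedMonomials a x, ← hq, normalFormCoeffs_mul_prod_X_sub_C]
  · intro y
    obtain ⟨p, rfl⟩ := Ideal.Quotient.mk_surjective y
    exact ⟨normalFormCoeffs a p, mk_reducedMonomials_normalFormCoeffs a p⟩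

lemma quotientEquiv_apply (x : ReducedExponent σ →₀ R) :
    quotientEquiv a x = Ideal.Quotient.mk _ (reducedMonomials R x) :=
  rfl

end Quotient

end StandardRing

/-- The quotient `R[X_0,…,X_n]/(X_0⋯X_n − a)` is a free `R`-module with basis the classes of
the monomials `X^μ` with `min_j μ_j = 0`, i.e. the monomials not divisible by `X_0⋯X_n`. -/
theorem standard_ring_free_basis (R : Type*) [CommRing R] (a : R) (n : ℕ) :
    ∃ b : Module.Basis {μ : Fin (n + 1) →₀ ℕ // ∃ j, μ j = 0} R
        (MvPolynomial (Fin (n + 1)) R ⧸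
          Ideal.span ({(∏ i : Fin (n + 1), X i) - C a} :
            Set (MvPolynomial (Fin (n + 1)) R))),
      ∀ μ : {μ : Fin (n + 1) →₀ ℕ // ∃ j, μ j = 0},
        b μ = Ideal.Quotient.mk _ (monomial μ.1 (1 : R)) :=
  ⟨.ofRepr (StandardRing.quotientEquiv a).symm, fun μ => by
    simp only [Module.Basis.coe_ofRepr, LinearEquiv.symm_symm,
      StandardRing.quotientEquiv_apply, StandardRing.reducedMonomials_single]⟩
end

section
/- Let k be a field, n ∈ ℕ and s ≥ 1. The minimal primes of the ring A := k[X_0,…,X_n, Y_1,…,Y_s]/(X_0⋯X_n, Y_1⋯Y_s) are exactly the ideals generated by the images of the pairs (X_j, Y_i) for j ∈ {0,…,n} and i ∈ {1,…,s}. In particular A has exactly (n+1)·s minimal primes. -/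
open MvPolynomial

namespace Stmt13Aux

variable {k : Type*} [Field k] {σ : Type*} [DecidableEq σ]

noncomputable def phi (a b : σ) : MvPolynomial σ k →ₐ[k] MvPolynomial σ k :=
  aeval (fun c => if c = a ∨ c = b then 0 else X c)

lemma sub_phi_mem (a b : σ) (p : MvPolynomial σ k) :
    p - phi a b p ∈ Ideal.span {X a, X b} := by
  induction p using MvPolynomial.induction_on with
  | C r => simp [phi]
  | add p q hp hq =>
      have : p + q - phi a b (p + q) = (p - phi a b p) + (q - phi a b q) := by
        rw [map_add]; ring
      rw [this]; exact Ideal.add_mem _ hp hq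
  | mul_X p c hp =>
      by_cases h : c = a ∨ c = b
      · have hX : phi a b (X c) = (0 : MvPolynomial σ k) := by simp [phi, h]
        have : p * X c - phi a b (p * X c) = p * X c := by
          rw [map_mul, hX, mul_zero, sub_zero]
        rw [this]
        exact Ideal.mul_mem_left _ _ (Ideal.subset_span (by
          rcases h with rfl | rfl <;> simp))
      · have hX : phi a b (X c) = (X c : MvPolynomial σ k) := by simp [phi, h]
        have : p * X c - phi a b (p * X c) = (p - phi a b p) * X c := by
          rw [map_mul, hX]; ring
        rw [this]
        exact Ideal.mul_mem_right _ _ hp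

lemma ker_phi (a b : σ) :
    RingHom.ker (phi (k := k) a b) = Ideal.span {X a, X b} := by
  apply le_antisymm
  · intro p hp
    rw [RingHom.mem_ker] at hp
    simpa [hp] using sub_phi_mem (k := k) a b p
  · rw [Ideal.span_le]
    intro x hx
    simp only [Set.mem_insert_iff, Set.mem_singleton_iff] at hx
    rcases hx with rfl | rfl <;>
      simp [SetLike.mem_coe, RingHom.mem_ker, phi]

lemma isPrime_span_pair (a b : σ) :
    (Ideal.span ({X a, X b} : Set (MvPolynomial σ k))).IsPrime := by
  rw [← ker_phi a b]
  exact RingHom.ker_isPrime _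

lemma X_mem_span_pair {a b c : σ} :
    (X c : MvPolynomial σ k) ∈ Ideal.span {X a, X b} ↔ c = a ∨ c = b := by
  rw [show ({X a, X b} : Set (MvPolynomial σ k)) = X '' {a, b} from
    (Set.image_pair X a b).symm, mem_ideal_span_X_image]
  simp only [support_X, Finset.mem_singleton, forall_eq, Set.mem_insert_iff,
    Set.mem_singleton_iff, exists_prop]
  constructor
  · rintro ⟨i, hi, hne⟩
    rw [Finsupp.single_apply] at hne
    split_ifs at hne with h
    · subst h; tauto
    · simp at hne
  · rintro (rfl | rfl)
    exacts [⟨c, Or.inl rfl, by simp⟩, ⟨c, Or.inr rfl, by simp⟩]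


end Stmt13Aux

namespace Stmt13

/-- The ideal `(X_0⋯X_n, Y_1⋯Y_s)` in `k[X_0,…,X_n,Y_1,…,Y_s]`, with the `X` variables indexed
by `Fin (n+1)` (via `Sum.inl`) and the `Y` variables by `Fin s` (via `Sum.inr`). -/
noncomputable def J (k : Type*) [Field k] (n s : ℕ) :
    Ideal (MvPolynomial (Fin (n + 1) ⊕ Fin s) k) :=
  Ideal.span {∏ j : Fin (n + 1), X (Sum.inl j), ∏ i : Fin s, X (Sum.inr i)}

section Aux
open Stmt13Aux

variable (k) in
noncomputable def P [Field k] (n s : ℕ) (j : Fin (n + 1)) (i : Fin s) :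
    Ideal (MvPolynomial (Fin (n + 1) ⊕ Fin s) k) :=
  Ideal.span {X (Sum.inl j), X (Sum.inr i)}


variable (n s : ℕ)

lemma J_le_P [Field k] (j : Fin (n + 1)) (i : Fin s) : J k n s ≤ P k n s j i := by
  rw [J, Ideal.span_le]
  intro x hx
  simp only [Set.mem_insert_iff, Set.mem_singleton_iff] at hx
  rcases hx with rfl | rfl
  · obtain ⟨c, hc⟩ := Finset.dvd_prod_of_mem (fun j => (X (Sum.inl j) :
      MvPolynomial (Fin (n + 1) ⊕ Fin s) k)) (Finset.mem_univ j)
    rw [hc]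
    exact Ideal.mul_mem_right _ _ (Ideal.subset_span (by simp [P]))
  · obtain ⟨c, hc⟩ := Finset.dvd_prod_of_mem (fun i => (X (Sum.inr i) :
      MvPolynomial (Fin (n + 1) ⊕ Fin s) k)) (Finset.mem_univ i)
    rw [hc]
    exact Ideal.mul_mem_right _ _ (Ideal.subset_span (by simp [P]))

lemma minimalPrimes_J [Field k] :
    (J k n s).minimalPrimes = {I | ∃ j i, I = P k n s j i} := by
  ext Q
  rw [Ideal.minimalPrimes, Set.mem_setOf_eq]
  constructor
  · rintro ⟨⟨hQp, hJQ⟩, hmin⟩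
    have hf : ∏ j : Fin (n + 1), (X (Sum.inl j) :
        MvPolynomial (Fin (n + 1) ⊕ Fin s) k) ∈ Q :=
      hJQ (Ideal.subset_span (Set.mem_insert _ _))
    have hg : ∏ i : Fin s, (X (Sum.inr i) :
        MvPolynomial (Fin (n + 1) ⊕ Fin s) k) ∈ Q :=
      hJQ (Ideal.subset_span (Set.mem_insert_of_mem _ rfl))
    rw [Ideal.IsPrime.prod_mem_iff] at hf hg
    obtain ⟨j, -, hj⟩ := hf
    obtain ⟨i, -, hi⟩ := hg
    have hPQ : P k n s j i ≤ Q := by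
      rw [P, Ideal.span_le]
      intro x hx
      simp only [Set.mem_insert_iff, Set.mem_singleton_iff] at hx
      rcases hx with rfl | rfl
      exacts [hj, hi]
    exact ⟨j, i, le_antisymm (hmin ⟨Stmt13Aux.isPrime_span_pair _ _, J_le_P n s j i⟩ hPQ) hPQ⟩
  · rintro ⟨j, i, rfl⟩
    refine ⟨⟨Stmt13Aux.isPrime_span_pair _ _, J_le_P n s j i⟩, ?_⟩
    rintro Q ⟨hQp, hJQ⟩ hQP
    have hf : ∏ j : Fin (n + 1), (X (Sum.inl j) :
        MvPolynomial (Fin (n + 1) ⊕ Fin s) k) ∈ Q :=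
      hJQ (Ideal.subset_span (Set.mem_insert _ _))
    have hg : ∏ i : Fin s, (X (Sum.inr i) :
        MvPolynomial (Fin (n + 1) ⊕ Fin s) k) ∈ Q :=
      hJQ (Ideal.subset_span (Set.mem_insert_of_mem _ rfl))
    rw [Ideal.IsPrime.prod_mem_iff] at hf hg
    obtain ⟨j', -, hj'⟩ := hf
    obtain ⟨i', -, hi'⟩ := hg
    have hjj : j' = j := by
      have := Stmt13Aux.X_mem_span_pair.mp (hQP hj')
      rcases this with h | h
      · exact Sum.inl.inj h
      · exact absurd h (by simp)
    have hii : i' = i := by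
      have := Stmt13Aux.X_mem_span_pair.mp (hQP hi')
      rcases this with h | h
      · exact absurd h (by simp)
      · exact Sum.inr.inj h
    subst hjj; subst hii
    rw [P, Ideal.span_le]
    intro x hx
    simp only [Set.mem_insert_iff, Set.mem_singleton_iff] at hx
    rcases hx with rfl | rfl
    exacts [hj', hi']

end Aux

/-- The minimal primes of `k[X_0,…,X_n,Y_1,…,Y_s]/(X_0⋯X_n, Y_1⋯Y_s)` (with `s ≥ 1`) are
exactly the ideals generated by the images of the pairs `(X_j, Y_i)`; in particular there are
exactly `(n+1)·s` of them. -/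
theorem minimalPrimes_standard_pair (k : Type*) [Field k] (n s : ℕ) (hs : 1 ≤ s) :
    minimalPrimes (MvPolynomial (Fin (n + 1) ⊕ Fin s) k ⧸ J k n s)
        = {I | ∃ (j : Fin (n + 1)) (i : Fin s),
            I = Ideal.span {Ideal.Quotient.mk (J k n s) (X (Sum.inl j)),
                            Ideal.Quotient.mk (J k n s) (X (Sum.inr i))}} ∧
      (minimalPrimes (MvPolynomial (Fin (n + 1) ⊕ Fin s) k ⧸ J k n s)).ncard
        = (n + 1) * s := by
  set mk := Ideal.Quotient.mk (J k n s) with hmk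
  have hsurj : Function.Surjective mk := Ideal.Quotient.mk_surjective
  have hcomap : (J k n s).minimalPrimes
      = Ideal.comap mk '' minimalPrimes (MvPolynomial (Fin (n + 1) ⊕ Fin s) k ⧸ J k n s) :=
    Ideal.minimalPrimes_eq_comap
  have hmap : ∀ (j : Fin (n + 1)) (i : Fin s),
      Ideal.map mk (P k n s j i)
        = Ideal.span {mk (X (Sum.inl j)), mk (X (Sum.inr i))} := by
    intro j i
    rw [P, Ideal.map_span, Set.image_pair]
  have hset : minimalPrimes (MvPolynomial (Fin (n + 1) ⊕ Fin s) k ⧸ J k n s)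
      = {I | ∃ (j : Fin (n + 1)) (i : Fin s),
          I = Ideal.span {mk (X (Sum.inl j)), mk (X (Sum.inr i))}} := by
    ext Q
    constructor
    · intro hQ
      have h1 : Ideal.comap mk Q ∈ (J k n s).minimalPrimes := by
        rw [hcomap]; exact ⟨Q, hQ, rfl⟩
      rw [minimalPrimes_J] at h1
      obtain ⟨j, i, hP⟩ := h1
      refine ⟨j, i, ?_⟩
      have h2 : Q = Ideal.map mk (Ideal.comap mk Q) :=
        (Ideal.map_comap_of_surjective mk hsurj Q).symm
      rw [h2, hP, hmap]
    · rintro ⟨j, i, rfl⟩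
      rw [← hmap]
      have h1 : P k n s j i ∈ (J k n s).minimalPrimes := by
        rw [minimalPrimes_J]; exact ⟨j, i, rfl⟩
      rw [hcomap] at h1
      obtain ⟨Q, hQ, hQc⟩ := h1
      rw [← hQc, Ideal.map_comap_of_surjective mk hsurj]
      exact hQ
  refine ⟨hset, ?_⟩
  have hinj : Function.Injective (fun p : Fin (n + 1) × Fin s =>
      Ideal.span {mk (X (Sum.inl p.1)), mk (X (Sum.inr p.2))}) := by
    rintro ⟨j, i⟩ ⟨j', i'⟩ h
    simp only at h
    have hcm : ∀ (a : Fin (n + 1)) (b : Fin s),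
        Ideal.comap mk (Ideal.span {mk (X (Sum.inl a)), mk (X (Sum.inr b))})
          = P k n s a b := by
      intro a b
      rw [← hmap, Ideal.comap_map_of_surjective mk hsurj, ← RingHom.ker_eq_comap_bot,
        hmk, Ideal.mk_ker]
      exact sup_eq_left.mpr (J_le_P n s a b)
    have hPP : P k n s j i = P k n s j' i' := by
      rw [← hcm j i, ← hcm j' i', h]
    have hj : Sum.inl (β := Fin s) j = Sum.inl j' ∨ Sum.inl (β := Fin s) j = Sum.inr i' :=
      Stmt13Aux.X_mem_span_pair.mp (hPP ▸ Ideal.subset_span (Set.mem_insert _ _) :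
        (X (Sum.inl j) : MvPolynomial (Fin (n + 1) ⊕ Fin s) k) ∈ P k n s j' i')
    have hi : Sum.inr (α := Fin (n + 1)) i = Sum.inl j' ∨
        Sum.inr (α := Fin (n + 1)) i = Sum.inr i' :=
      Stmt13Aux.X_mem_span_pair.mp (hPP ▸ Ideal.subset_span (Set.mem_insert_of_mem _ rfl) :
        (X (Sum.inr i) : MvPolynomial (Fin (n + 1) ⊕ Fin s) k) ∈ P k n s j' i')
    have e1 : j = j' := by
      rcases hj with h | h
      · exact Sum.inl.inj h
      · exact absurd h (by simp)
    have e2 : i = i' := by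
      rcases hi with h | h
      · exact absurd h (by simp)
      · exact Sum.inr.inj h
    simp [e1, e2]
  have hrange : minimalPrimes (MvPolynomial (Fin (n + 1) ⊕ Fin s) k ⧸ J k n s)
      = Set.range (fun p : Fin (n + 1) × Fin s =>
          Ideal.span {mk (X (Sum.inl p.1)), mk (X (Sum.inr p.2))}) := by
    rw [hset]; ext Q; simp [Set.mem_range, Prod.exists, eq_comm]
  rw [hrange, ← Set.image_univ, Set.ncard_image_of_injective _ hinj, Set.ncard_univ]
  simp [Nat.card_eq_fintype_card]

end Stmt13
end

section
/- Let K be a field equipped with a nonarchimedean (multiplicative) absolute value |·|, let m ∈ ℕ, and let ρ : Fin m → (0,1] be a weight function. Define the weighted Gauss norm on the multivariate polynomial ring K[X_1,…,X_m] by ‖f‖_ρ := max_μ |c_μ| · ∏_i ρ_i^{μ_i}, where f = Σ_μ c_μ X^μ. Then ‖·‖_ρ is multiplicative: ‖fg‖_ρ = ‖f‖_ρ · ‖g‖_ρ for all f, g ∈ K[X_1,…,X_m]. -/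
/-!
The upper bound `‖fg‖ ≤ ‖f‖‖g‖` is the ultrametric inequality applied to
`coeff κ (f * g) = ∑_{μ + ν = κ} coeff μ f * coeff ν g`, together with `w (μ + ν) = w μ * w ν`.
For the lower bound, choose the lexicographically largest exponents `μ` of `f` and `ν` of `g`
attaining the norms. Lexicographic order is compatible with addition, so every other pair on the
antidiagonal of `μ + ν` has a strictly larger exponent on one side, hence a strictly smaller
weighted term; the pair `(μ, ν)` dominates and `coeff (μ + ν) (f * g)` attains `‖f‖‖g‖`.
-/

open MvPolynomial Finset
open scoped NNReal

theorem AbsoluteValue.map_neg' {R S : Type*} [Ring R] [Nontrivial R] [Semiring S] [LinearOrder S]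
    [IsStrictOrderedRing S] [IsDomain S] (v : AbsoluteValue R S) (a : R) : v (-a) = v a := by
  have h : v (-1) = 1 := by
    rw [← pow_eq_one_iff_of_nonneg (v.nonneg _) two_ne_zero, sq, ← v.map_mul, neg_mul_neg,
      mul_one, v.map_one]
  rw [neg_eq_neg_one_mul, v.map_mul, h, one_mul]

theorem lt_or_lt_of_add_eq_add_of_ne {M : Type*} [AddCommMonoid M] [LinearOrder M]
    [IsOrderedCancelAddMonoid M] {a b c d : M} (h : c + d = a + b) (hne : ¬(c = a ∧ d = b)) :
    a < c ∨ b < d := by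
  by_contra! hle
  exact hne ((add_eq_add_iff_eq_and_eq hle.1 hle.2).mp h)

namespace MvPolynomial

variable {σ R : Type*}

section CommSemiring

variable [CommSemiring R]

/-- For `w μ = ∏ i, ρ i ^ μ i` this is the weighted Gauss norm `‖f‖_ρ`. -/
def weightedGaussNorm (v : AbsoluteValue R ℝ≥0) (w : (σ →₀ ℕ) → ℝ≥0) (f : MvPolynomial σ R) :
    ℝ≥0 :=
  f.support.sup fun μ => v (coeff μ f) * w μ

variable {v : AbsoluteValue R ℝ≥0} {w : (σ →₀ ℕ) → ℝ≥0}

theorem le_weightedGaussNorm (f : MvPolynomial σ R) (μ : σ →₀ ℕ) :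
    v (coeff μ f) * w μ ≤ weightedGaussNorm v w f := by
  by_cases hμ : μ ∈ f.support
  · exact le_sup (f := fun μ => v (coeff μ f) * w μ) hμ
  · simp [notMem_support_iff.mp hμ]

theorem weightedGaussNorm_mul_le (hna : IsNonarchimedean v) (hw : ∀ μ ν, w (μ + ν) = w μ * w ν)
    (f g : MvPolynomial σ R) :
    weightedGaussNorm v w (f * g) ≤ weightedGaussNorm v w f * weightedGaussNorm v w g := by
  classical
  refine Finset.sup_le fun κ _ => ?_
  obtain ⟨x, hx, hx_dom⟩ := hna.finset_image_add_of_nonempty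
    (fun x : (σ →₀ ℕ) × (σ →₀ ℕ) => coeff x.1 f * coeff x.2 g) (t := antidiagonal κ)
    ⟨(κ, 0), by simp⟩
  rw [coeff_mul]
  calc v (∑ x ∈ antidiagonal κ, coeff x.1 f * coeff x.2 g) * w κ
      ≤ v (coeff x.1 f * coeff x.2 g) * w κ := by gcongr
    _ = (v (coeff x.1 f) * w x.1) * (v (coeff x.2 g) * w x.2) := by
      rw [← mem_antidiagonal.mp hx, hw, v.map_mul, mul_mul_mul_comm]
    _ ≤ _ := mul_le_mul' (le_weightedGaussNorm f x.1) (le_weightedGaussNorm g x.2)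

variable [LinearOrder σ]

theorem exists_lex_max_eq_weightedGaussNorm {f : MvPolynomial σ R}
    (hf : weightedGaussNorm v w f ≠ 0) :
    ∃ μ, v (coeff μ f) * w μ = weightedGaussNorm v w f ∧
      ∀ ν, toLex μ < toLex ν → v (coeff ν f) * w ν < weightedGaussNorm v w f := by
  have hsupp : f.support.Nonempty :=
    nonempty_iff_ne_empty.mpr fun h => hf (by simp [weightedGaussNorm, h])
  obtain ⟨μ₁, hμ₁, hμ₁max⟩ := exists_mem_eq_sup f.support hsupp fun μ => v (coeff μ f) * w μ
  set T := f.support.filter fun μ => v (coeff μ f) * w μ = weightedGaussNorm v w f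
  obtain ⟨μ, hμT, hμmax⟩ := exists_max_image T toLex ⟨μ₁, mem_filter.mpr ⟨hμ₁, hμ₁max.symm⟩⟩
  refine ⟨μ, (mem_filter.mp hμT).2, fun ν hlt => (le_weightedGaussNorm f ν).lt_of_ne fun heq => ?_⟩
  have hν : ν ∈ f.support := mem_support_iff.mpr fun h0 => hf (by simpa [h0] using heq.symm)
  exact hlt.not_ge (hμmax ν (mem_filter.mpr ⟨hν, heq⟩))

end CommSemiring

section CommRing

variable [CommRing R] [Nontrivial R] {v : AbsoluteValue R ℝ≥0} {w : (σ →₀ ℕ) → ℝ≥0}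

theorem le_weightedGaussNorm_mul [LinearOrder σ] (hna : IsNonarchimedean v)
    (hw : ∀ μ ν, w (μ + ν) = w μ * w ν) (f g : MvPolynomial σ R) :
    weightedGaussNorm v w f * weightedGaussNorm v w g ≤ weightedGaussNorm v w (f * g) := by
  set N := weightedGaussNorm v w
  rcases eq_or_ne (N f) 0 with hf | hf
  · simp [hf]
  rcases eq_or_ne (N g) 0 with hg | hg
  · simp [hg]
  obtain ⟨μ, hμ, hμlt⟩ := exists_lex_max_eq_weightedGaussNorm hf
  obtain ⟨ν, hν, hνlt⟩ := exists_lex_max_eq_weightedGaussNorm hg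
  have hmain : v (coeff μ f * coeff ν g) * w (μ + ν) = N f * N g := by
    rw [v.map_mul, hw, mul_mul_mul_comm, hμ, hν]
  have hdom : ∀ x ∈ antidiagonal (μ + ν), x ≠ (μ, ν) →
      v (coeff x.1 f * coeff x.2 g) < v (coeff μ f * coeff ν g) := by
    intro x hx hne
    refine lt_of_mul_lt_mul_right (a := w (μ + ν)) ?_ zero_le
    rw [hmain, ← mem_antidiagonal.mp hx, hw, v.map_mul, mul_mul_mul_comm]
    have hsum : toLex x.1 + toLex x.2 = toLex μ + toLex ν := (mem_antidiagonal.mp hx :)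
    rcases lt_or_lt_of_add_eq_add_of_ne hsum fun ⟨h₁, h₂⟩ => hne (Prod.ext h₁ h₂) with h | h
    · exact mul_lt_mul_of_lt_of_le_of_nonneg_of_pos (hμlt _ h) (le_weightedGaussNorm g x.2)
        zero_le (pos_of_ne_zero hg)
    · exact mul_lt_mul_of_le_of_lt_of_nonneg_of_pos (le_weightedGaussNorm f x.1) (hνlt _ h)
        zero_le (pos_of_ne_zero hf)
  calc N f * N g = v (coeff (μ + ν) (f * g)) * w (μ + ν) := by
        rw [coeff_mul, hna.apply_sum_eq_of_lt (fun a => (v.map_neg' a).symm) (k := (μ, ν))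
          (mem_antidiagonal.mpr rfl) hdom, hmain]
    _ ≤ N (f * g) := le_weightedGaussNorm _ _

theorem weightedGaussNorm_mul (hna : IsNonarchimedean v) (hw : ∀ μ ν, w (μ + ν) = w μ * w ν)
    (f g : MvPolynomial σ R) :
    weightedGaussNorm v w (f * g) = weightedGaussNorm v w f * weightedGaussNorm v w g := by
  -- any linear order on the variables serves to define the lexicographic order
  let : LinearOrder σ := IsWellOrder.linearOrder WellOrderingRel
  exact (weightedGaussNorm_mul_le hna hw f g).antisymm (le_weightedGaussNorm_mul hna hw f g)

end CommRing

end MvPolynomial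

theorem weighted_gauss_norm_mul_general {K : Type*} [Field K] (m : ℕ)
    (v : AbsoluteValue K ℝ≥0) (hna : ∀ x y : K, v (x + y) ≤ max (v x) (v y))
    (p : Fin m → ℝ≥0)
    (f g : MvPolynomial (Fin m) K) :
    (f * g).support.sup (fun μ => v (coeff μ (f * g)) * ∏ i, p i ^ μ i)
      = (f.support.sup fun μ => v (coeff μ f) * ∏ i, p i ^ μ i)
        * (g.support.sup fun μ => v (coeff μ g) * ∏ i, p i ^ μ i) :=
  weightedGaussNorm_mul hna (fun μ ν => by simp only [Finsupp.add_apply, pow_add, prod_mul_distrib])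
    f g

/-- The weighted Gauss norm `‖f‖_ρ = max_μ |c_μ| ∏_i ρ_i^{μ_i}` (weights `ρ_i ∈ (0,1]`)
associated to a nonarchimedean absolute value on a field `K` is multiplicative on the
polynomial ring `K[X_1,…,X_m]`. -/
theorem weighted_gauss_norm_mul {K : Type*} [Field K] (m : ℕ)
    (v : AbsoluteValue K ℝ≥0) (hna : ∀ x y : K, v (x + y) ≤ max (v x) (v y))
    (p : Fin m → ℝ≥0) (hp : ∀ i, 0 < p i ∧ p i ≤ 1)
    (f g : MvPolynomial (Fin m) K) :
    (f * g).support.sup (fun μ => v (coeff μ (f * g)) * ∏ i, p i ^ μ i)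
      = (f.support.sup fun μ => v (coeff μ f) * ∏ i, p i ^ μ i)
        * (g.support.sup fun μ => v (coeff μ g) * ∏ i, p i ^ μ i) :=
  weighted_gauss_norm_mul_general m v hna p f g
end

section
/- Let K be a field with a nonarchimedean absolute value |·|, let a ∈ K with |a| ≤ 1, let n ∈ ℕ, and let s ∈ ℝ≥0^{n+1} with s_0 + ⋯ + s_n = −log|a|, all s_j < ∞. Define x_s on the quotient ring A := K[X_0,…,X_n]/(X_0⋯X_n − a) by x_s(f) := max_μ |c_μ| · exp(−Σ_j μ_j s_j), where f is represented by its unique polynomial representative Σ_μ c_μ X^μ with no monomial divisible by X_0⋯X_n. Then x_s is a multiplicative seminorm on A extending |·| on K, i.e. x_s(fg) = x_s(f)·x_s(g), x_s(f+g) ≤ max(x_s(f), x_s(g)), and x_s(c) = |c| for c ∈ K; moreover x_s(X_j) = exp(−s_j) for all j. -/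
open MvPolynomial
open scoped NNReal

namespace Stmt15


/-! ### Auxiliary absolute value lemmas -/

section AbsVal

variable {K : Type*} [Field K] (v : AbsoluteValue K ℝ≥0)

lemma v_one : v 1 = 1 := by
  have h := v.map_mul 1 1
  rw [one_mul] at h
  have h1 : v 1 ≠ 0 := v.ne_zero one_ne_zero
  field_simp at h
  exact h.symm

lemma v_pow (x : K) : ∀ k : ℕ, v (x ^ k) = v x ^ k := by
  intro k; induction k with
  | zero => simp [pow_zero, v_one]
  | succ k ih => rw [pow_succ, pow_succ, v.map_mul, ih]

lemma v_neg (y : K) : v (-y) = v y := by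
  have h1 : v (-1 : K) * v (-1 : K) = 1 := by
    rw [← v.map_mul]; norm_num [v_one]
  have h2 : v (-1 : K) = 1 := by
    have := h1
    have hc : ((v (-1 : K) : ℝ)) * ((v (-1 : K) : ℝ)) = 1 := by exact_mod_cast this
    have hnn : (0 : ℝ) ≤ (v (-1 : K) : ℝ) := (v (-1 : K)).coe_nonneg
    have : ((v (-1 : K) : ℝ)) = 1 := by nlinarith
    exact_mod_cast this
  calc v (-y) = v ((-1) * y) := by rw [neg_one_mul]
  _ = v (-1) * v y := v.map_mul _ _
  _ = v y := by rw [h2, one_mul]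

/-- ultrametric equality -/
lemma v_add_eq (hna : ∀ x y : K, v (x + y) ≤ max (v x) (v y)) {x y : K}
    (h : v y < v x) : v (x + y) = v x := by
  have hle1 : v (x + y) ≤ v x := le_trans (hna x y) (max_le le_rfl h.le)
  have hge : v x ≤ max (v (x + y)) (v y) := by
    have h5 := hna (x + y) (-y)
    rw [v_neg v y] at h5
    simpa using h5
  refine le_antisymm hle1 ?_
  rcases max_cases (v (x + y)) (v y) with ⟨he, _⟩ | ⟨he, _⟩
  · rw [he] at hge; exact hge
  · rw [he] at hge; exact absurd (lt_of_le_of_lt hge h) (lt_irrefl _)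

/-- `v` of a finite sum is at most `B` (after multiplying by `c`) if each term is. -/
lemma v_sum_mul_le (hna : ∀ x y : K, v (x + y) ≤ max (v x) (v y)) {ι : Type*} (S : Finset ι) (h : ι → K) (c B : ℝ≥0)
    (hb : ∀ i ∈ S, v (h i) * c ≤ B) : v (∑ i ∈ S, h i) * c ≤ B := by
  classical
  induction S using Finset.cons_induction with
  | empty => simp
  | cons i S hi ih =>
    rw [Finset.sum_cons]
    have h1 := hna (h i) (∑ j ∈ S, h j)
    have h2 : max (v (h i)) (v (∑ j ∈ S, h j)) * c ≤ B := by
      rcases max_choice (v (h i)) (v (∑ j ∈ S, h j)) with h3 | h3 <;> rw [h3]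
      · exact hb i (Finset.mem_cons_self i S)
      · exact ih fun j hj => hb j (Finset.mem_cons_of_mem hj)
    exact le_trans (mul_le_mul_left h1 c) h2

lemma v_sum_mul_lt (hna : ∀ x y : K, v (x + y) ≤ max (v x) (v y)) {ι : Type*} (S : Finset ι) (h : ι → K) (c B : ℝ≥0) (hB : 0 < B)
    (hb : ∀ i ∈ S, v (h i) * c < B) : v (∑ i ∈ S, h i) * c < B := by
  classical
  induction S using Finset.cons_induction with
  | empty => simpa using hB
  | cons i S hi ih =>
    rw [Finset.sum_cons]
    have h1 := hna (h i) (∑ j ∈ S, h j)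
    have h2 : max (v (h i)) (v (∑ j ∈ S, h j)) * c < B := by
      rcases max_choice (v (h i)) (v (∑ j ∈ S, h j)) with h3 | h3 <;> rw [h3]
      · exact hb i (Finset.mem_cons_self i S)
      · exact ih fun j hj => hb j (Finset.mem_cons_of_mem hj)
    exact lt_of_le_of_lt (mul_le_mul_left h1 c) h2

end AbsVal

/-! ### The weighted Gauss norm on an `AddMonoidAlgebra` and its multiplicativity -/

section Gauss

variable {K : Type*} [Field K] {G : Type*} [AddCommGroup G] [LinearOrder G] [IsOrderedAddMonoid G]
variable (v : AbsoluteValue K ℝ≥0) (wt : G → ℝ≥0)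

/-- The weighted Gauss (sup) norm. -/
noncomputable def WL (p : AddMonoidAlgebra K G) : ℝ≥0 :=
  p.coeff.support.sup fun g => v (p.coeff g) * wt g

lemma apply_le_WL (p : AddMonoidAlgebra K G) (g : G) : v (p.coeff g) * wt g ≤ WL v wt p := by
  by_cases h : g ∈ p.coeff.support
  · exact Finset.le_sup (f := fun g => v (p.coeff g) * wt g) h
  · rw [Finsupp.notMem_support_iff.mp h, v.map_zero, zero_mul]
    exact zero_le

lemma WL_add_le (hna : ∀ x y : K, v (x + y) ≤ max (v x) (v y)) (p q : AddMonoidAlgebra K G) :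
    WL v wt (p + q) ≤ max (WL v wt p) (WL v wt q) := by
  unfold WL
  apply Finset.sup_le
  intro g _
  have h1 : v ((p + q).coeff g) ≤ max (v (p.coeff g)) (v (q.coeff g)) := by
    rw [AddMonoidAlgebra.coeff_add, Finsupp.add_apply]; exact hna _ _
  rcases max_choice (v (p.coeff g)) (v (q.coeff g)) with h3 | h3 <;> rw [h3] at h1
  · exact le_trans (le_trans (mul_le_mul_left h1 _) (apply_le_WL v wt p g)) (le_max_left _ _)
  · exact le_trans (le_trans (mul_le_mul_left h1 _) (apply_le_WL v wt q g)) (le_max_right _ _)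

lemma WL_single (g : G) (c : K) : WL v wt (AddMonoidAlgebra.single g c) = v c * wt g := by
  by_cases h : c = 0
  · subst h; simp [WL]
  · rw [WL, AddMonoidAlgebra.coeff_single, Finsupp.support_single_ne_zero g h, Finset.sup_singleton, Finsupp.single_eq_same]

lemma WL_eq_zero {p : AddMonoidAlgebra K G} (hwt0 : ∀ x, wt x ≠ 0) (h : WL v wt p = 0) :
    p = 0 := by
  ext g
  by_contra hg
  have hg' : g ∈ p.coeff.support := Finsupp.mem_support_iff.mpr hg
  have := Finset.le_sup (f := fun g => v (p.coeff g) * wt g) hg'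
  rw [WL] at h
  rw [h, nonpos_iff_eq_zero, mul_eq_zero] at this
  rcases this with h1 | h1
  · exact hg (v.eq_zero.mp h1)
  · exact hwt0 g h1

lemma WL_mul (hna : ∀ x y : K, v (x + y) ≤ max (v x) (v y))
    (hwt : ∀ x y, wt (x + y) = wt x * wt y) (hwt0 : ∀ x, wt x ≠ 0)
    (p q : AddMonoidAlgebra K G) : WL v wt (p * q) = WL v wt p * WL v wt q := by
  classical
  -- upper bound
  have key : ∀ g : G, v ((p * q).coeff g) * wt g ≤ WL v wt p * WL v wt q := by
    intro g
    rw [AddMonoidAlgebra.coeff_mul, Finsupp.sum]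
    refine v_sum_mul_le v hna _ _ _ _ ?_
    intro a₁ ha₁
    rw [Finsupp.sum]
    refine v_sum_mul_le v hna _ _ _ _ ?_
    intro a₂ ha₂
    by_cases hc : a₁ + a₂ = g
    · rw [if_pos hc, ← hc, hwt, v.map_mul]
      calc v (p.coeff a₁) * v (q.coeff a₂) * (wt a₁ * wt a₂)
          = (v (p.coeff a₁) * wt a₁) * (v (q.coeff a₂) * wt a₂) := by ring
        _ ≤ WL v wt p * WL v wt q :=
            mul_le_mul' (apply_le_WL v wt p a₁) (apply_le_WL v wt q a₂)
    · rw [if_neg hc]; simp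
  have hle : WL v wt (p * q) ≤ WL v wt p * WL v wt q := Finset.sup_le fun g _ => key g
  by_cases hp : p = 0
  · subst hp; simp [WL]
  by_cases hq : q = 0
  · subst hq; simp [WL]
  -- lower bound
  have hpn : p.coeff.support.Nonempty := Finsupp.support_nonempty_iff.mpr (by simpa using hp)
  have hqn : q.coeff.support.Nonempty := Finsupp.support_nonempty_iff.mpr (by simpa using hq)
  set Sp := p.coeff.support.filter (fun g => v (p.coeff g) * wt g = WL v wt p) with hSp
  set Sq := q.coeff.support.filter (fun g => v (q.coeff g) * wt g = WL v wt q) with hSq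
  have hSpn : Sp.Nonempty := by
    obtain ⟨g, hg, he⟩ := Finset.exists_mem_eq_sup p.coeff.support hpn (fun g => v (p.coeff g) * wt g)
    exact ⟨g, Finset.mem_filter.mpr ⟨hg, he.symm⟩⟩
  have hSqn : Sq.Nonempty := by
    obtain ⟨g, hg, he⟩ := Finset.exists_mem_eq_sup q.coeff.support hqn (fun g => v (q.coeff g) * wt g)
    exact ⟨g, Finset.mem_filter.mpr ⟨hg, he.symm⟩⟩
  set lam := Sp.max' hSpn with hlam
  set mu := Sq.max' hSqn with hmu
  have hlam_mem := Finset.mem_filter.mp (Sp.max'_mem hSpn)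
  have hmu_mem := Finset.mem_filter.mp (Sq.max'_mem hSqn)
  have hWp : v (p.coeff lam) * wt lam = WL v wt p := hlam_mem.2
  have hWq : v (q.coeff mu) * wt mu = WL v wt q := hmu_mem.2
  have hWp0 : WL v wt p ≠ 0 := by
    rw [← hWp]
    exact mul_ne_zero (v.ne_zero (Finsupp.mem_support_iff.mp hlam_mem.1)) (hwt0 _)
  have hWq0 : WL v wt q ≠ 0 := by
    rw [← hWq]
    exact mul_ne_zero (v.ne_zero (Finsupp.mem_support_iff.mp hmu_mem.1)) (hwt0 _)
  have hB0 : 0 < WL v wt p * WL v wt q := pos_iff_ne_zero.mpr (mul_ne_zero hWp0 hWq0)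
  -- strictness away from the maximizers
  have hstrict_p : ∀ g ∈ p.coeff.support, g ≠ lam → lam < g → v (p.coeff g) * wt g < WL v wt p := by
    intro g hg hne hgt
    rcases lt_or_eq_of_le (Finset.le_sup (f := fun g => v (p.coeff g) * wt g) hg) with h | h
    · exact h
    · exfalso
      have : g ∈ Sp := Finset.mem_filter.mpr ⟨hg, h⟩
      exact absurd (Finset.le_max' Sp g this) (not_le.mpr hgt)
  have hstrict_q : ∀ g ∈ q.coeff.support, mu < g → v (q.coeff g) * wt g < WL v wt q := by
    intro g hg hgt
    rcases lt_or_eq_of_le (Finset.le_sup (f := fun g => v (q.coeff g) * wt g) hg) with h | h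
    · exact h
    · exfalso
      have : g ∈ Sq := Finset.mem_filter.mpr ⟨hg, h⟩
      exact absurd (Finset.le_max' Sq g this) (not_le.mpr hgt)
  set nu := lam + mu with hnu
  -- the coefficient of nu in p*q
  set F : G → K := fun a₁ => ∑ a₂ ∈ q.coeff.support, if a₁ + a₂ = nu then p.coeff a₁ * q.coeff a₂ else 0 with hF
  have hcoeff : (p * q).coeff nu = ∑ a₁ ∈ p.coeff.support, F a₁ := by
    rw [AddMonoidAlgebra.coeff_mul, Finsupp.sum]
    refine Finset.sum_congr rfl fun a₁ _ => ?_
    rw [Finsupp.sum]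
  have hFlam : F lam = p.coeff lam * q.coeff mu := by
    simp only [hF]
    have : ∀ a₂ ∈ q.coeff.support, (if lam + a₂ = nu then p.coeff lam * q.coeff a₂ else 0)
        = if a₂ = mu then p.coeff lam * q.coeff a₂ else 0 := by
      intro a₂ _
      congr 1
      simp only [hnu, eq_iff_iff]
      constructor
      · intro h; exact add_left_cancel h
      · intro h; rw [h]
    rw [Finset.sum_congr rfl this, Finset.sum_ite_eq' q.coeff.support mu (fun a₂ => p.coeff lam * q.coeff a₂)]
    rw [if_pos hmu_mem.1]
  have hFrest : ∀ a₁ ∈ p.coeff.support, a₁ ≠ lam →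
      v (F a₁) * wt nu < WL v wt p * WL v wt q := by
    intro a₁ ha₁ hne
    simp only [hF]
    refine v_sum_mul_lt v hna _ _ _ _ hB0 ?_
    intro a₂ ha₂
    by_cases hc : a₁ + a₂ = nu
    · rw [if_pos hc, ← hc, hwt, v.map_mul]
      have hprod : v (p.coeff a₁) * v (q.coeff a₂) * (wt a₁ * wt a₂)
          = (v (p.coeff a₁) * wt a₁) * (v (q.coeff a₂) * wt a₂) := by ring
      rw [hprod]
      rcases lt_trichotomy a₁ lam with hlt | heq | hgt
      · -- then a₂ > mu
        have ha2gt : mu < a₂ := by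
          by_contra hle
          push_neg at hle
          have : a₁ + a₂ < lam + mu := add_lt_add_of_lt_of_le hlt hle
          rw [hc] at this
          exact lt_irrefl _ this
        have h1 : v (p.coeff a₁) * wt a₁ ≤ WL v wt p := apply_le_WL v wt p a₁
        have h2 : v (q.coeff a₂) * wt a₂ < WL v wt q := hstrict_q a₂ ha₂ ha2gt
        calc (v (p.coeff a₁) * wt a₁) * (v (q.coeff a₂) * wt a₂)
            ≤ WL v wt p * (v (q.coeff a₂) * wt a₂) := mul_le_mul_left h1 _
          _ < WL v wt p * WL v wt q := by
              exact mul_lt_mul_of_pos_left h2 (pos_iff_ne_zero.mpr hWp0)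
      · exact absurd heq hne
      · have h1 : v (p.coeff a₁) * wt a₁ < WL v wt p := hstrict_p a₁ ha₁ hne hgt
        have h2 : v (q.coeff a₂) * wt a₂ ≤ WL v wt q := apply_le_WL v wt q a₂
        calc (v (p.coeff a₁) * wt a₁) * (v (q.coeff a₂) * wt a₂)
            ≤ (v (p.coeff a₁) * wt a₁) * WL v wt q := mul_le_mul_right h2 _
          _ < WL v wt p * WL v wt q := by
              exact mul_lt_mul_of_pos_right h1 (pos_iff_ne_zero.mpr hWq0)
    · rw [if_neg hc]; simpa using hB0
  -- main term has the right size
  have hmain : v (p.coeff lam * q.coeff mu) * wt nu = WL v wt p * WL v wt q := by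
    rw [v.map_mul, hnu, hwt, ← hWp, ← hWq]; ring
  -- combine
  have hrest : v (∑ a₁ ∈ p.coeff.support.erase lam, F a₁) * wt nu < WL v wt p * WL v wt q := by
    refine v_sum_mul_lt v hna _ _ _ _ hB0 ?_
    intro a₁ ha₁
    exact hFrest a₁ (Finset.mem_of_mem_erase ha₁) (Finset.ne_of_mem_erase ha₁)
  have hsplit : (p * q).coeff nu = p.coeff lam * q.coeff mu + ∑ a₁ ∈ p.coeff.support.erase lam, F a₁ := by
    rw [hcoeff, ← hFlam, Finset.add_sum_erase _ F hlam_mem.1]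
  have hvrest_lt : v (∑ a₁ ∈ p.coeff.support.erase lam, F a₁) < v (p.coeff lam * q.coeff mu) := by
    have := hrest
    rw [← hmain] at this
    exact lt_of_mul_lt_mul_right this (zero_le)
  have hval : v ((p * q).coeff nu) = v (p.coeff lam * q.coeff mu) := by
    rw [hsplit]; exact v_add_eq v hna hvrest_lt
  have hge : WL v wt p * WL v wt q ≤ WL v wt (p * q) := by
    rw [← hmain, ← hval]
    exact apply_le_WL v wt (p * q) nu
  exact le_antisymm hle hge

end Gauss

/-! ### Instantiation: the skeleton point -/

section Skeleton

variable {K : Type*} [Field K]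

/-- exponent group -/
abbrev Gn (n : ℕ) := Lex (Fin n →₀ ℤ)

noncomputable def ee {n : ℕ} (i : Fin n) : Gn n := toLex (Finsupp.single i 1)

noncomputable def sigmaG (n : ℕ) : Gn n := ∑ i, ee i

noncomputable def tvars (n : ℕ) (a : K) : Fin (n + 1) → AddMonoidAlgebra K (Gn n) :=
  Fin.cons (AddMonoidAlgebra.single (-(sigmaG n)) a)
    (fun i => AddMonoidAlgebra.single (ee i) 1)

noncomputable def phi (n : ℕ) (a : K) :
    MvPolynomial (Fin (n + 1)) K →ₐ[K] AddMonoidAlgebra K (Gn n) :=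
  aeval (tvars n a)

noncomputable def psi {n : ℕ} (μ : Fin (n + 1) →₀ ℕ) : Gn n :=
  (∑ i : Fin n, ((μ i.succ : ℤ) - (μ 0 : ℤ)) • ee i)

lemma ee_apply {n : ℕ} (i i' : Fin n) : ofLex (ee i) i' = if i = i' then 1 else 0 := by
  simp [ee, Finsupp.single_apply]

lemma Gn_ext {n : ℕ} {x y : Gn n} (h : ∀ i, ofLex x i = ofLex y i) : x = y := by
  have h2 : ofLex x = ofLex y := Finsupp.ext h
  exact ofLex.injective h2

lemma coord_add {n : ℕ} (x y : Gn n) (i : Fin n) : ofLex (x + y) i = ofLex x i + ofLex y i := rfl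

lemma coord_nsmul {n : ℕ} (k : ℕ) (x : Gn n) (i : Fin n) :
    ofLex (k • x) i = k • (ofLex x i) := rfl

lemma coord_zsmul {n : ℕ} (k : ℤ) (x : Gn n) (i : Fin n) :
    ofLex (k • x) i = k • (ofLex x i) := rfl

lemma coord_neg {n : ℕ} (x : Gn n) (i : Fin n) : ofLex (-x) i = -(ofLex x i) := rfl

lemma ofLex_sum {n : ℕ} {ι : Type*} (S : Finset ι) (f : ι → Gn n) (i : Fin n) :
    ofLex (∑ j ∈ S, f j) i = ∑ j ∈ S, ofLex (f j) i := by
  classical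
  induction S using Finset.cons_induction with
  | empty => rfl
  | cons j S hj ih => rw [Finset.sum_cons, Finset.sum_cons, ← ih]; rfl

lemma sigmaG_apply {n : ℕ} (i : Fin n) : ofLex (sigmaG n) i = 1 := by
  rw [sigmaG, ofLex_sum]
  rw [Finset.sum_eq_single i (fun b _ hb => by rw [ee_apply]; simp [hb]) (by simp)]
  simp [ee_apply]

lemma psi_apply {n : ℕ} (μ : Fin (n + 1) →₀ ℕ) (i : Fin n) :
    ofLex (psi μ) i = (μ i.succ : ℤ) - (μ 0 : ℤ) := by
  rw [psi, ofLex_sum]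
  rw [Finset.sum_eq_single i (fun b _ hb => ?_) (by simp)]
  · have : ofLex (((μ i.succ : ℤ) - (μ 0 : ℤ)) • ee i) i
        = ((μ i.succ : ℤ) - (μ 0 : ℤ)) • ofLex (ee i) i := rfl
    rw [this, ee_apply]
    simp
  · have : ofLex (((μ b.succ : ℤ) - (μ 0 : ℤ)) • ee b) i
        = ((μ b.succ : ℤ) - (μ 0 : ℤ)) • ofLex (ee b) i := rfl
    rw [this, ee_apply]
    simp [hb]

lemma psi_injOn {n : ℕ} {μ ν : Fin (n + 1) →₀ ℕ} (hμ : ∃ j, μ j = 0) (hν : ∃ j, ν j = 0)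
    (h : psi μ = psi ν) : μ = ν := by
  have hco : ∀ i : Fin n, (μ i.succ : ℤ) - (μ 0 : ℤ) = (ν i.succ : ℤ) - (ν 0 : ℤ) := by
    intro i
    rw [← psi_apply μ i, ← psi_apply ν i, h]
  have h0 : μ 0 = ν 0 := by
    rcases lt_trichotomy (μ 0) (ν 0) with hlt | heq | hgt
    · exfalso
      obtain ⟨j, hj⟩ := hν
      rcases Fin.eq_zero_or_eq_succ j with rfl | ⟨i, rfl⟩
      · omega
      · have := hco i; omega
    · exact heq
    · exfalso
      obtain ⟨j, hj⟩ := hμ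
      rcases Fin.eq_zero_or_eq_succ j with rfl | ⟨i, rfl⟩
      · omega
      · have := hco i; omega
  ext j
  rcases Fin.eq_zero_or_eq_succ j with rfl | ⟨i, rfl⟩
  · exact h0
  · have := hco i; omega

/-- product of singles with coefficient 1 -/
lemma prod_single_one {n : ℕ} {ι : Type*} (S : Finset ι) (g : ι → Gn n) :
    (∏ i ∈ S, AddMonoidAlgebra.single (g i) (1 : K))
      = AddMonoidAlgebra.single (∑ i ∈ S, g i) 1 := by
  classical
  induction S using Finset.cons_induction with
  | empty => rfl
  | cons j S hj ih =>
    rw [Finset.prod_cons, Finset.sum_cons, ih, AddMonoidAlgebra.single_mul_single, one_mul]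

lemma phi_X_zero (n : ℕ) (a : K) :
    phi n a (X 0) = AddMonoidAlgebra.single (-(sigmaG n)) a := by
  rw [phi, aeval_X, tvars, Fin.cons_zero]

lemma phi_X_succ (n : ℕ) (a : K) (i : Fin n) :
    phi n a (X i.succ) = AddMonoidAlgebra.single (ee i) 1 := by
  rw [phi, aeval_X, tvars, Fin.cons_succ]

lemma phi_C (n : ℕ) (a : K) (c : K) :
    phi n a (C c) = AddMonoidAlgebra.single 0 c := by
  rw [phi, aeval_C]
  simp [AddMonoidAlgebra.coe_algebraMap]

lemma phi_gen (n : ℕ) (a : K) : phi n a ((∏ i : Fin (n + 1), X i) - C a) = 0 := by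
  rw [map_sub, map_prod, phi_C]
  have h1 : ∀ i : Fin (n + 1), phi n a (X i) = tvars n a i := fun i => aeval_X _ i
  rw [Finset.prod_congr rfl fun i _ => h1 i, Fin.prod_univ_succ]
  have h0 : tvars n a 0 = AddMonoidAlgebra.single (-(sigmaG n)) a := by
    simp only [tvars, Fin.cons_zero]
  have h3 : ∀ i : Fin n, tvars n a i.succ = AddMonoidAlgebra.single (ee i) (1 : K) := by
    intro i; simp only [tvars, Fin.cons_succ]
  rw [h0, Finset.prod_congr rfl fun i _ => h3 i, prod_single_one,
    show (∑ i : Fin n, ee (n := n) i) = sigmaG n from rfl,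
    AddMonoidAlgebra.single_mul_single, mul_one, neg_add_cancel, sub_self]

lemma phi_monomial (n : ℕ) (a : K) (μ : Fin (n + 1) →₀ ℕ) (c : K) :
    phi n a (monomial μ c) = AddMonoidAlgebra.single (psi μ) (c * a ^ (μ 0)) := by
  rw [phi, aeval_monomial, Finsupp.prod_pow]
  have h1 : ∀ i : Fin (n+1), tvars n a i ^ μ i = tvars n a i ^ μ i := fun _ => rfl
  rw [Fin.prod_univ_succ]
  rw [tvars]
  simp only [Fin.cons_zero, Fin.cons_succ]
  rw [AddMonoidAlgebra.single_pow]
  have h2 : (∏ i : Fin n, AddMonoidAlgebra.single (ee i) (1:K) ^ μ i.succ)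
      = AddMonoidAlgebra.single (∑ i : Fin n, (μ i.succ) • ee i) 1 := by
    rw [Finset.prod_congr rfl fun (i : Fin n) _ => AddMonoidAlgebra.single_pow _ _ (μ i.succ)]
    rw [Finset.prod_congr rfl fun (i : Fin n) _ => (by rw [one_pow] :
        AddMonoidAlgebra.single ((μ i.succ) • ee i) ((1:K) ^ μ i.succ)
          = AddMonoidAlgebra.single ((μ i.succ) • ee i) 1)]
    exact prod_single_one _ _
  rw [h2, AddMonoidAlgebra.single_mul_single]
  rw [AddMonoidAlgebra.coe_algebraMap]
  simp only [Function.comp_apply, Algebra.algebraMap_self, RingHom.id_apply]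
  rw [AddMonoidAlgebra.single_mul_single, zero_add, mul_one]
  congr 1
  -- exponent identity : μ 0 • -sigmaG n + ∑ i, μ i.succ • ee i = psi μ
  refine Gn_ext fun i => ?_
  rw [coord_add, coord_nsmul, coord_neg, sigmaG_apply, ofLex_sum, psi_apply]
  rw [Finset.sum_eq_single i (fun b _ hb => by rw [coord_nsmul, ee_apply]; simp [hb]) (by simp)]
  rw [coord_nsmul, ee_apply]
  simp only [if_pos rfl, smul_eq_mul, mul_one]
  push_cast
  ring

lemma sum_single_apply {n : ℕ} {ι : Type*} (S : Finset ι) (g : ι → Gn n) (b : ι → K)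
    (hinj : Set.InjOn g S) {i0 : ι} (hi0 : i0 ∈ S) :
    (∑ i ∈ S, AddMonoidAlgebra.single (g i) (b i)).coeff (g i0) = b i0 := by
  classical
  rw [AddMonoidAlgebra.coeff_sum, Finsupp.finset_sum_apply S (fun i => (AddMonoidAlgebra.single (g i) (b i)).coeff) (g i0)]
  rw [Finset.sum_eq_single i0 (fun i hi hne => ?_) (fun h => absurd hi0 h)]
  · rw [AddMonoidAlgebra.coeff_single, Finsupp.single_eq_same]
  · rw [AddMonoidAlgebra.coeff_single, Finsupp.single_apply, if_neg]
    intro h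
    exact hne (hinj hi hi0 h)

lemma support_sum_single {n : ℕ} {ι : Type*} (S : Finset ι) (g : ι → Gn n) (b : ι → K)
    (hinj : Set.InjOn g S) (hb : ∀ i ∈ S, b i ≠ 0) :
    (∑ i ∈ S, AddMonoidAlgebra.single (g i) (b i)).coeff.support = S.image g := by
  classical
  ext γ
  constructor
  · intro hγ
    by_contra hγ'
    rw [Finsupp.mem_support_iff, AddMonoidAlgebra.coeff_sum,
      Finsupp.finset_sum_apply S (fun i => (AddMonoidAlgebra.single (g i) (b i)).coeff) γ] at hγ
    refine hγ (Finset.sum_eq_zero fun i hi => ?_)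
    rw [AddMonoidAlgebra.coeff_single, Finsupp.single_apply, if_neg]
    intro h
    exact hγ' (Finset.mem_image.mpr ⟨i, hi, h⟩)
  · intro hγ
    obtain ⟨i0, hi0, rfl⟩ := Finset.mem_image.mp hγ
    rw [Finsupp.mem_support_iff, sum_single_apply S g b hinj hi0]
    exact hb i0 hi0

lemma WL_sum_single {n : ℕ} (v : AbsoluteValue K ℝ≥0) (wt : Gn n → ℝ≥0) {ι : Type*}
    (S : Finset ι) (g : ι → Gn n) (b : ι → K)
    (hinj : Set.InjOn g S) (hb : ∀ i ∈ S, b i ≠ 0) :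
    WL v wt (∑ i ∈ S, AddMonoidAlgebra.single (g i) (b i))
      = S.sup fun i => v (b i) * wt (g i) := by
  classical
  rw [WL, support_sum_single S g b hinj hb, Finset.sup_image]
  refine Finset.sup_congr rfl fun i hi => ?_
  rw [Function.comp_apply, sum_single_apply S g b hinj hi]

/-- the weight function on exponents -/
noncomputable def wtG (n : ℕ) (s : Fin (n + 1) → ℝ) (g : Gn n) : ℝ≥0 :=
  Real.toNNReal (Real.exp (-(∑ i : Fin n, ((ofLex g i : ℝ) * s i.succ))))

lemma texp_mul (x y : ℝ) : Real.toNNReal (Real.exp x) * Real.toNNReal (Real.exp y)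
    = Real.toNNReal (Real.exp (x + y)) := by
  rw [Real.exp_add, Real.toNNReal_mul (Real.exp_nonneg x)]

lemma wtG_mul (n : ℕ) (s : Fin (n + 1) → ℝ) (x y : Gn n) :
    wtG n s (x + y) = wtG n s x * wtG n s y := by
  rw [wtG, wtG, wtG, texp_mul]
  have h : (∑ i : Fin n, ((ofLex (x + y) i : ℝ) * s i.succ))
      = (∑ i : Fin n, ((ofLex x i : ℝ) * s i.succ))
        + (∑ i : Fin n, ((ofLex y i : ℝ) * s i.succ)) := by
    rw [← Finset.sum_add_distrib]
    refine Finset.sum_congr rfl fun i _ => ?_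
    rw [coord_add]
    push_cast
    ring
  rw [h, neg_add]

lemma wtG_ne_zero (n : ℕ) (s : Fin (n + 1) → ℝ) (g : Gn n) : wtG n s g ≠ 0 :=
  ne_of_gt (Real.toNNReal_pos.mpr (Real.exp_pos _))

lemma wtG_zero (n : ℕ) (s : Fin (n + 1) → ℝ) : wtG n s 0 = 1 := by
  rw [wtG]
  have h : ∀ i : Fin n, ((ofLex (0 : Gn n) i : ℝ) * s i.succ) = 0 := by
    intro i
    have : ofLex (0 : Gn n) i = 0 := rfl
    rw [this]
    push_cast
    ring
  rw [Finset.sum_congr rfl fun i _ => h i]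
  simp

lemma weight_eq (n : ℕ) (a : K) (v : AbsoluteValue K ℝ≥0) (s : Fin (n + 1) → ℝ)
    (hsum : (v a : ℝ) = Real.exp (-(∑ j, s j))) (μ : Fin (n + 1) →₀ ℕ) (c : K) :
    v (c * a ^ (μ 0)) * wtG n s (psi μ)
      = v c * Real.toNNReal (Real.exp (-(∑ j, (μ j : ℝ) * s j))) := by
  have hva : v a = Real.toNNReal (Real.exp (-(∑ j, s j))) := by
    apply NNReal.coe_injective
    rw [hsum, Real.coe_toNNReal _ (Real.exp_nonneg _)]
  rw [v.map_mul, v_pow, hva]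
  have hpow : (Real.toNNReal (Real.exp (-(∑ j, s j)))) ^ (μ 0)
      = Real.toNNReal (Real.exp ((μ 0 : ℝ) * -(∑ j, s j))) := by
    rw [← Real.toNNReal_pow (Real.exp_nonneg _), ← Real.exp_nat_mul]
  rw [hpow, mul_assoc, wtG, texp_mul]
  congr 2
  have h2 : (∑ i : Fin n, ((ofLex (psi μ) i : ℝ) * s i.succ))
      = ∑ i : Fin n, (((μ i.succ : ℝ) - (μ 0 : ℝ)) * s i.succ) := by
    refine Finset.sum_congr rfl fun i _ => ?_
    rw [psi_apply]
    push_cast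
    ring
  have h3 : ∑ i : Fin n, (((μ i.succ : ℝ) - (μ 0 : ℝ)) * s i.succ)
      = (∑ i : Fin n, (μ i.succ : ℝ) * s i.succ) - (μ 0 : ℝ) * ∑ i : Fin n, s i.succ := by
    rw [Finset.mul_sum, ← Finset.sum_sub_distrib]
    exact Finset.sum_congr rfl fun i _ => by ring
  rw [h2, h3, Fin.sum_univ_succ (f := fun j => s j),
    Fin.sum_univ_succ (f := fun j => (μ j : ℝ) * s j)]
  congr 1
  ring

end Skeleton


/-! ### Main theorem -/

/-- The ideal `(X_0⋯X_n − a)` of `K[X_0,…,X_n]`. -/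
noncomputable def I (K : Type*) [Field K] (a : K) (n : ℕ) :
    Ideal (MvPolynomial (Fin (n + 1)) K) :=
  Ideal.span {(∏ i : Fin (n + 1), X i) - C a}

/-- The skeleton point `x_s` of the standard affinoid algebra: given a nonarchimedean absolute
value `|·|` on `K`, `a ∈ K` with `|a| ≤ 1` and a finite tuple `s ∈ ℝ≥0^{n+1}` with
`∑ s_j = −log|a|` (i.e. `|a| = exp(−∑ s_j)`), the assignment
`x_s(f) = max_μ |c_μ| exp(−∑ μ_j s_j)` (computed on the unique representative of `f` none of
whose monomials is divisible by `X_0⋯X_n`) is a multiplicative, nonarchimedean seminorm on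
`A = K[X_0,…,X_n]/(X_0⋯X_n − a)` extending `|·|`, and `x_s(X_j) = exp(−s_j)`. -/
theorem exists_skeleton_seminorm {K : Type*} [Field K]
    (v : AbsoluteValue K ℝ≥0) (hna : ∀ x y : K, v (x + y) ≤ max (v x) (v y))
    (a : K) (ha : v a ≤ 1) (n : ℕ)
    (s : Fin (n + 1) → ℝ) (hs : ∀ j, 0 ≤ s j)
    (hsum : (v a : ℝ) = Real.exp (-(∑ j, s j))) :
    ∃ xs : (MvPolynomial (Fin (n + 1)) K ⧸ I K a n) → ℝ≥0,
      (∀ f : MvPolynomial (Fin (n + 1)) K,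
        (∀ μ ∈ f.support, ∃ j, μ j = 0) →
        xs (Ideal.Quotient.mk (I K a n) f)
          = f.support.sup fun μ =>
              v (coeff μ f) * Real.toNNReal (Real.exp (-(∑ j, (μ j : ℝ) * s j)))) ∧
      (∀ f g, xs (f * g) = xs f * xs g) ∧
      (∀ f g, xs (f + g) ≤ max (xs f) (xs g)) ∧
      (∀ c : K, xs (Ideal.Quotient.mk (I K a n) (C c)) = v c) ∧
      (∀ j : Fin (n + 1),
        xs (Ideal.Quotient.mk (I K a n) (X j)) = Real.toNNReal (Real.exp (-(s j)))) := by
  classical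
  have ha0 : a ≠ 0 := by
    intro h
    rw [h, v.map_zero] at hsum
    have h2 : (0 : ℝ) = Real.exp (-(∑ j, s j)) := by simpa using hsum
    exact (Real.exp_pos _).ne' h2.symm
  have hva : v a = Real.toNNReal (Real.exp (-(∑ j, s j))) := by
    apply NNReal.coe_injective
    rw [hsum, Real.coe_toNNReal _ (Real.exp_nonneg _)]
  have hwt : ∀ x y : Gn n, wtG n s (x + y) = wtG n s x * wtG n s y := wtG_mul n s
  have hwt0 : ∀ x, wtG n s x ≠ 0 := wtG_ne_zero n s
  have hvanish : ∀ x ∈ I K a n, (phi n a).toRingHom x = 0 := by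
    intro x hx
    rw [I] at hx
    obtain ⟨c, hc⟩ := Ideal.mem_span_singleton'.mp hx
    rw [← hc]
    show phi n a (c * ((∏ i : Fin (n + 1), X i) - C a)) = 0
    rw [map_mul, phi_gen, mul_zero]
  set Lq := Ideal.Quotient.lift (I K a n) (phi n a).toRingHom hvanish with hLq
  have hmk : ∀ f, Lq (Ideal.Quotient.mk (I K a n) f) = phi n a f :=
    fun f => Ideal.Quotient.lift_mk _ _ _
  refine ⟨fun q => WL v (wtG n s) (Lq q), ?_, ?_, ?_, ?_, ?_⟩
  · -- canonical formula
    intro f hf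
    have hphi : phi n a f = ∑ μ ∈ f.support,
        AddMonoidAlgebra.single (psi μ) (coeff μ f * a ^ (μ 0)) := by
      conv_lhs => rw [← support_sum_monomial_coeff f]
      rw [map_sum]
      exact Finset.sum_congr rfl fun μ _ => phi_monomial n a μ (coeff μ f)
    simp only [hmk]
    rw [hphi, WL_sum_single v (wtG n s) f.support psi (fun μ => coeff μ f * a ^ (μ 0))
      (fun μ hμ ν hν h => psi_injOn (hf μ (Finset.mem_coe.mp hμ)) (hf ν (Finset.mem_coe.mp hν)) h)
      (fun μ hμ => mul_ne_zero (MvPolynomial.mem_support_iff.mp hμ) (pow_ne_zero _ ha0))]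
    exact Finset.sup_congr rfl fun μ _ => weight_eq n a v s hsum μ (coeff μ f)
  · intro f g
    show WL v (wtG n s) (Lq (f * g)) = WL v (wtG n s) (Lq f) * WL v (wtG n s) (Lq g)
    rw [RingHom.map_mul]
    exact WL_mul v (wtG n s) hna hwt hwt0 _ _
  · intro f g
    show WL v (wtG n s) (Lq (f + g)) ≤ max (WL v (wtG n s) (Lq f)) (WL v (wtG n s) (Lq g))
    rw [RingHom.map_add]
    exact WL_add_le v (wtG n s) hna _ _
  · intro c
    simp only [hmk]
    rw [phi_C, WL_single, wtG_zero, mul_one]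
  · intro j
    rcases Fin.eq_zero_or_eq_succ j with rfl | ⟨i, rfl⟩
    · simp only [hmk]
      rw [phi_X_zero, WL_single, hva, wtG, texp_mul]
      have h : (∑ i : Fin n, ((ofLex (-(sigmaG n)) i : ℝ) * s i.succ))
          = -∑ i : Fin n, s i.succ := by
        rw [← Finset.sum_neg_distrib]
        refine Finset.sum_congr rfl fun i _ => ?_
        rw [coord_neg, sigmaG_apply]
        push_cast
        ring
      rw [h, Fin.sum_univ_succ (f := fun j => s j)]
      refine congrArg Real.toNNReal (congrArg Real.exp ?_)
      ring
    · simp only [hmk]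
      rw [phi_X_succ, WL_single, v_one, one_mul, wtG]
      have h : (∑ i' : Fin n, ((ofLex (ee i) i' : ℝ) * s i'.succ)) = s i.succ := by
        rw [Finset.sum_eq_single i (fun b _ hb => ?_) (by simp)]
        · rw [ee_apply, if_pos rfl]
          push_cast
          ring
        · rw [ee_apply, if_neg (fun hh => hb hh.symm)]
          push_cast
          ring
      rw [h]


end Stmt15
end
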